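/- arXiv:1709.06382 — 7 statements merged into one kernel-verified Lean document; each statement's English description precedes it below -/
import Mathlib

section
/- Let (A,φ) with operators T_i, T_i^*, T_i′ satisfy conditions (C1)–(C4). Then for every odd r ≥ 1 and every ε ∈ {1,*,′}^r, lim_{N→∞} φ(S_N^{ε(1)} ⋯ S_N^{ε(r)}) = 0. -/
open Filter
open scoped BigOperators Classical

/-- The three kinds of labels `1, ∗, ′` for the operators. -/
inductive Eps : Type
  | one
  | star
  | prime
  deriving DecidableEq

/-- `Teps T T' ε i` is the operator `T_i^ε`. -/
def Teps {A : Type*} [Ring A] [StarRing A] (T T' : ℕ → A) : Eps → ℕ → A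
  | Eps.one, i => T i
  | Eps.star, i => star (T i)
  | Eps.prime, i => T' i

/-- The ordered product `T_{i(1)}^{ε(1)} ⋯ T_{i(r)}^{ε(r)}`. -/
def prodT {A : Type*} [Ring A] [StarRing A] (T T' : ℕ → A) {r : ℕ}
    (ε : Fin r → Eps) (i : Fin r → ℕ) : A :=
  (List.ofFn fun j => Teps T T' (ε j) (i j)).prod

/-- `ker i = π` for a set partition `π` of `[r]`, encoded as a setoid on `Fin r`. -/
def kerEq {r : ℕ} (i : Fin r → ℕ) (π : Setoid (Fin r)) : Prop :=
  ∀ k l, i k = i l ↔ π.r k l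

/-- Condition (C1): vanishing means and vanishing of all second mixed moments except
`φ(T_i^* T_i)` and `φ(T_i^* T_i′)`. -/
def C1 {A : Type*} [Ring A] [Algebra ℂ A] [StarRing A]
    (φ : A →ₗ[ℂ] ℂ) (T T' : ℕ → A) : Prop :=
  (∀ (i : ℕ) (e : Eps), φ (Teps T T' e i) = 0) ∧
  (∀ (i : ℕ) (e e' : Eps), ¬ (e = Eps.star ∧ (e' = Eps.one ∨ e' = Eps.prime)) →
    φ (Teps T T' e i * Teps T T' e' i) = 0)

/-- Condition (C2): uniform bounds for moments with a fixed kernel. -/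
def C2 {A : Type*} [Ring A] [Algebra ℂ A] [StarRing A]
    (φ : A →ₗ[ℂ] ℂ) (T T' : ℕ → A) : Prop :=
  ∀ (r : ℕ) (π : Setoid (Fin r)), ∃ ρ : ℝ, 0 ≤ ρ ∧
    ∀ (ε : Fin r → Eps) (i : Fin r → ℕ), kerEq i π →
      ‖φ (prodT T T' ε i)‖ ≤ ρ

/-- Condition (C3): the state factors over interval partitions.  A word whose kernel is an
interval partition is presented as a concatenation of groups, each group having a constant
index, different groups having distinct indices. -/
def C3 {A : Type*} [Ring A] [Algebra ℂ A] [StarRing A]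
    (φ : A →ₗ[ℂ] ℂ) (T T' : ℕ → A) : Prop :=
  ∀ G : List (List (Eps × ℕ)),
    (∀ g ∈ G, g ≠ [] ∧ ∃ m, ∀ x ∈ g, Prod.snd x = m) →
    (G.Pairwise fun g₁ g₂ => ∀ x₁ ∈ g₁, ∀ x₂ ∈ g₂, Prod.snd x₁ ≠ Prod.snd x₂) →
    φ ((G.flatten.map fun x => Teps T T' x.1 x.2).prod) =
      (G.map fun g => φ ((g.map fun x => Teps T T' x.1 x.2).prod)).prod

/-- Condition (C4): commutation relations `T_i^ε T_j^{ε'} = Q_{ε,ε'}(i,j) T_j^{ε'} T_i^ε`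
for `i ≠ j`. -/
def C4 {A : Type*} [Ring A] [Algebra ℂ A] [StarRing A]
    (T T' : ℕ → A) (Q : Eps → Eps → ℕ → ℕ → ℝ) : Prop :=
  ∀ (i j : ℕ), i ≠ j → ∀ (e e' : Eps),
    Teps T T' e i * Teps T T' e' j = (Q e e' i j : ℂ) • (Teps T T' e' j * Teps T T' e i)

/-- A pair partition of `[m]`, encoded as a fixed-point-free involution `p`:
the blocks are the sets `{x, p x}`. -/
def IsPairing {m : ℕ} (p : Fin m → Fin m) : Prop :=
  ∀ x, p (p x) = x ∧ p x ≠ x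

/-- A coloring `f : π → {±1}` of the blocks (encoded pointwise, constant on blocks;
`true` stands for the color `1`, `false` for the color `-1`). -/
def IsColoring {m : ℕ} (p : Fin m → Fin m) (f : Fin m → Bool) : Prop :=
  ∀ x, f (p x) = f x

/-- Membership of a colored pair partition in `P^B_{2,ε}`: on each block `{z, w}` with
`z < w` one has `ε(z) = ∗` and `ε(w) = 1` resp. `′` according to the color. -/
def EpsCompat {m : ℕ} (ε : Fin m → Eps) (p : Fin m → Fin m) (f : Fin m → Bool) : Prop :=
  ∀ x, x < p x → ε x = Eps.star ∧ ε (p x) = (if f x then Eps.one else Eps.prime)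

/-- `ker i = π` for the pair partition encoded by the involution `p`. -/
def kerPair {m : ℕ} (i : Fin m → ℕ) (p : Fin m → Fin m) : Prop :=
  ∀ k l, i k = i l ↔ (k = l ∨ p k = l)

/-- The coefficient `Ξ(π_f, i)`: a product of commutation coefficients over crossing pairs
of blocks and over nesting pairs of blocks.  Here `a, b` run over left legs of blocks. -/
noncomputable def Xi (Q : Eps → Eps → ℕ → ℕ → ℝ) {m : ℕ}
    (p : Fin m → Fin m) (f : Fin m → Bool) (i : Fin m → ℕ) : ℝ :=
  (∏ a : Fin m, ∏ b : Fin m,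
    if a < p a ∧ b < p b ∧ a < b ∧ b < p a ∧ p a < p b then
      Q Eps.star (if f a then Eps.one else Eps.prime) (i b) (i (p a)) else 1) *
  (∏ a : Fin m, ∏ b : Fin m,
    if a < p a ∧ b < p b ∧ a < b ∧ p b < p a then
      Q Eps.star Eps.star (i a) (i b) *
        Q Eps.star (if f b then Eps.one else Eps.prime) (i a) (i (p b)) else 1)

/-- The quantity whose limit (as `N → ∞`) is `λ_{π_f}` in condition (C5):
`N^{-n} ∑_{i ∈ [N]^{2n}, ker i = π} Ξ(π_f,i) ∏_{f=1} φ(T^*T) ∏_{f=-1} φ(T^*T')`. -/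
noncomputable def Ysum {A : Type*} [Ring A] [Algebra ℂ A] [StarRing A]
    (φ : A →ₗ[ℂ] ℂ) (T T' : ℕ → A) (Q : Eps → Eps → ℕ → ℕ → ℝ)
    (n N : ℕ) (p : Fin (2 * n) → Fin (2 * n)) (f : Fin (2 * n) → Bool) : ℂ :=
  ((N : ℂ) ^ n)⁻¹ *
    ∑ i ∈ (Fintype.piFinset fun _ : Fin (2 * n) => Finset.Icc 1 N).filter
        (fun i => kerPair i p),
      ((Xi Q p f i : ℝ) : ℂ) *
        (∏ a : Fin (2 * n),
          if a < p a ∧ f a = true then φ (star (T (i a)) * T (i (p a))) else 1) *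
        (∏ a : Fin (2 * n),
          if a < p a ∧ f a = false then φ (star (T (i a)) * T' (i (p a))) else 1)

/-- The normalized sum `S_N^ε = (T_1^ε + ⋯ + T_N^ε)/√N`. -/
noncomputable def SN {A : Type*} [Ring A] [Algebra ℂ A] [StarRing A]
    (T T' : ℕ → A) (e : Eps) (N : ℕ) : A :=
  ((Real.sqrt N : ℂ))⁻¹ • ∑ k ∈ Finset.Icc 1 N, Teps T T' e k

/-!
Expanding the product, `φ(S_N^{ε(1)} ⋯ S_N^{ε(r)})` is `N^{-r/2}` times a sum of moments
`φ(T_{i(1)}^{ε(1)} ⋯ T_{i(r)}^{ε(r)})` over `i ∈ [N]^r`. If some index occurs only once in `i`,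
the commutation relations (C4) regroup the word by index up to a real scalar, (C3) factors the
moment over the groups, and the singleton group has mean zero by (C1). Every other tuple takes at
most `(r - 1)/2` distinct values, so there are `O(N^{(r-1)/2})` of them, and by (C2) their
moments are bounded uniformly; the total is `O(N^{-1/2})`.
-/

section WordProd

variable {A : Type*} [Ring A] [StarRing A] {T T' : ℕ → A}

def wordProd (T T' : ℕ → A) (w : List (Eps × ℕ)) : A :=
  (w.map fun x => Teps T T' x.1 x.2).prod

@[simp] lemma wordProd_nil : wordProd T T' [] = 1 := rfl

@[simp] lemma wordProd_cons (a : Eps × ℕ) (w : List (Eps × ℕ)) :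
    wordProd T T' (a :: w) = Teps T T' a.1 a.2 * wordProd T T' w := by
  simp [wordProd]

@[simp] lemma wordProd_append (u v : List (Eps × ℕ)) :
    wordProd T T' (u ++ v) = wordProd T T' u * wordProd T T' v := by
  simp [wordProd]

lemma prodT_eq_wordProd {r : ℕ} (ε : Fin r → Eps) (i : Fin r → ℕ) :
    prodT T T' ε i = wordProd T T' (List.ofFn fun j => (ε j, i j)) := by
  simp [prodT, wordProd, List.map_ofFn, Function.comp_def]

lemma exists_wordProd_cons_append_eq_smul [Algebra ℂ A] {Q : Eps → Eps → ℕ → ℕ → ℝ}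
    (hC4 : C4 T T' Q) (a : Eps × ℕ)
    {u : List (Eps × ℕ)} (hu : ∀ x ∈ u, x.2 ≠ a.2) (v : List (Eps × ℕ)) :
    ∃ c : ℝ, wordProd T T' (a :: (u ++ v)) = (c : ℂ) • wordProd T T' (u ++ a :: v) := by
  induction u with
  | nil => exact ⟨1, by simp⟩
  | cons b u ih =>
    obtain ⟨c, hc⟩ := ih fun x hx => hu x (List.mem_cons_of_mem b hx)
    refine ⟨Q a.1 b.1 a.2 b.2 * c, ?_⟩
    have hab := hC4 a.2 b.2 (hu b List.mem_cons_self).symm a.1 b.1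
    rw [List.cons_append, List.cons_append, wordProd_cons, wordProd_cons, wordProd_cons,
      ← mul_assoc, hab, smul_mul_assoc, mul_assoc, ← wordProd_cons, hc, mul_smul_comm,
      smul_smul, Complex.ofReal_mul]

def groupByIndex (ms : List ℕ) (w : List (Eps × ℕ)) : List (List (Eps × ℕ)) :=
  ms.map fun m => w.filter fun x => decide (x.2 = m)

@[simp] lemma groupByIndex_cons (m : ℕ) (ms : List ℕ) (w : List (Eps × ℕ)) :
    groupByIndex (m :: ms) w = (w.filter fun x => decide (x.2 = m)) :: groupByIndex ms w :=
  rfl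

lemma exists_wordProd_cons_flatten_groupByIndex_eq_smul [Algebra ℂ A]
    {Q : Eps → Eps → ℕ → ℕ → ℝ} (hC4 : C4 T T' Q) (a : Eps × ℕ)
    (w : List (Eps × ℕ)) {ms : List ℕ} (hms : ms.Nodup) (ha : a.2 ∈ ms) :
    ∃ c : ℝ, wordProd T T' (a :: (groupByIndex ms w).flatten) =
      (c : ℂ) • wordProd T T' (groupByIndex ms (a :: w)).flatten := by
  induction ms with
  | nil => simp at ha
  | cons m ms ih =>
    obtain ⟨hm, hms⟩ := List.nodup_cons.1 hms
    by_cases ham : a.2 = m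
    · subst ham
      have hrest : groupByIndex ms (a :: w) = groupByIndex ms w :=
        List.map_congr_left fun m' hm' =>
          List.filter_cons_of_neg (by simpa using fun h : a.2 = m' => hm (h ▸ hm'))
      refine ⟨1, ?_⟩
      simp [hrest]
    · obtain ⟨c, hc⟩ := ih hms ((List.mem_cons.1 ha).resolve_left ham)
      obtain ⟨c', hc'⟩ := exists_wordProd_cons_append_eq_smul hC4 a
        (u := w.filter fun x => decide (x.2 = m)) (by simp +contextual [Ne.symm ham])
        (groupByIndex ms w).flatten
      refine ⟨c' * c, ?_⟩
      simp only [groupByIndex_cons, List.flatten_cons] at hc' ⊢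
      rw [hc', wordProd_append, wordProd_append, hc, mul_smul_comm, smul_smul,
        Complex.ofReal_mul, List.filter_cons_of_neg (by simpa using ham)]

lemma exists_wordProd_eq_smul_flatten_groupByIndex [Algebra ℂ A]
    {Q : Eps → Eps → ℕ → ℕ → ℝ} (hC4 : C4 T T' Q) {ms : List ℕ} (hms : ms.Nodup)
    (w : List (Eps × ℕ)) (hw : ∀ x ∈ w, x.2 ∈ ms) :
    ∃ c : ℝ, wordProd T T' w = (c : ℂ) • wordProd T T' (groupByIndex ms w).flatten := by
  induction w with
  | nil => exact ⟨1, by simp [groupByIndex]⟩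
  | cons a w ih =>
    obtain ⟨c, hc⟩ := ih fun x hx => hw x (List.mem_cons_of_mem a hx)
    obtain ⟨c', hc'⟩ :=
      exists_wordProd_cons_flatten_groupByIndex_eq_smul hC4 a w hms (hw a List.mem_cons_self)
    refine ⟨c * c', ?_⟩
    rw [wordProd_cons, hc, mul_smul_comm, ← wordProd_cons, hc', smul_smul, Complex.ofReal_mul]

lemma map_wordProd_eq_zero [Algebra ℂ A] {φ : A →ₗ[ℂ] ℂ} {Q : Eps → Eps → ℕ → ℕ → ℝ}
    (hC1 : C1 φ T T') (hC3 : C3 φ T T') (hC4 : C4 T T' Q) {w : List (Eps × ℕ)} {m : ℕ}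
    (hm : (w.filter fun x => decide (x.2 = m)).length = 1) :
    φ (wordProd T T' w) = 0 := by
  set ms := (w.map Prod.snd).dedup
  have hms : ms.Nodup := List.nodup_dedup _
  obtain ⟨c, hc⟩ := exists_wordProd_eq_smul_flatten_groupByIndex hC4 hms w
    fun x hx => List.mem_dedup.2 (List.mem_map_of_mem hx)
  have hgroups : ∀ g ∈ groupByIndex ms w, g ≠ [] ∧ ∃ m, ∀ x ∈ g, x.2 = m := by
    simp only [groupByIndex, List.mem_map]
    rintro _ ⟨m', hm', rfl⟩
    obtain ⟨x, hx, rfl⟩ := List.mem_map.1 (List.mem_dedup.1 hm')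
    exact ⟨List.ne_nil_of_mem (List.mem_filter.2 ⟨hx, by simp⟩), x.2, by simp⟩
  have hdistinct : (groupByIndex ms w).Pairwise
      fun g₁ g₂ => ∀ x₁ ∈ g₁, ∀ x₂ ∈ g₂, x₁.2 ≠ x₂.2 :=
    List.pairwise_map.2 <| hms.imp fun hne x₁ hx₁ x₂ hx₂ => by
      simp only [List.mem_filter, decide_eq_true_eq] at hx₁ hx₂
      rw [hx₁.2, hx₂.2]
      exact hne
  obtain ⟨x, hx⟩ := List.length_eq_one_iff.1 hm
  obtain ⟨hxw, hxm⟩ := List.mem_filter.1 (hx ▸ List.mem_singleton_self x)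
  have hsingleton : (w.filter fun y => decide (y.2 = m)) ∈ groupByIndex ms w :=
    List.mem_map.2 ⟨m, List.mem_dedup.2 (List.mem_map.2 ⟨x, hxw, of_decide_eq_true hxm⟩), rfl⟩
  rw [hc, map_smul, wordProd, hC3 _ hgroups hdistinct]
  refine smul_eq_zero_of_right _ (List.prod_eq_zero (List.mem_map.2 ⟨_, hsingleton, ?_⟩))
  simp [hx, hC1.1]

end WordProd

section Counting

open Finset

variable {β : Type*} [DecidableEq β]

lemma two_mul_card_image_le {r : ℕ} {i : Fin r → β} (h : ∀ k, ∃ l ≠ k, i l = i k) :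
    2 * #(univ.image i) ≤ r := by
  simpa using mul_card_image_le_card (f := i) univ 2 fun b hb => by
    obtain ⟨k, -, rfl⟩ := mem_image.1 hb
    obtain ⟨l, hlk, hl⟩ := h k
    exact one_lt_card.2 ⟨l, by simp [hl], k, by simp, hlk⟩

/-- A tuple with at most `n` distinct values factors through `Fin n`. -/
lemma card_filter_card_image_le {s : Finset β} (hs : s.Nonempty) (r n : ℕ) :
    #{i ∈ Fintype.piFinset (fun _ : Fin r => s) | #(univ.image i) ≤ n} ≤ n ^ r * #s ^ n := by
  obtain ⟨b, hb⟩ := hs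
  calc _ ≤ #((univ ×ˢ Fintype.piFinset fun _ : Fin n => s).image
          fun σg : (Fin r → Fin n) × (Fin n → β) => σg.2 ∘ σg.1) := card_le_card ?_
    _ ≤ #(univ ×ˢ Fintype.piFinset fun _ : Fin n => s) := card_image_le
    _ = n ^ r * #s ^ n := by simp [card_product]
  intro i hi
  obtain ⟨his, hcard⟩ := mem_filter.1 hi
  obtain ⟨e⟩ : Nonempty (univ.image i ↪ Fin n) :=
    Function.Embedding.nonempty_of_card_le (by simpa using hcard)
  let σ : Fin r → Fin n := fun j => e ⟨i j, mem_image_of_mem i (mem_univ j)⟩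
  let g : Fin n → β := Function.extend e Subtype.val fun _ => b
  refine mem_image.2 ⟨(σ, g), mem_product.2 ⟨mem_univ _, Fintype.mem_piFinset.2 fun m => ?_⟩,
    funext fun j => e.injective.extend_apply Subtype.val (fun _ => b) ⟨i j, _⟩⟩
  change g m ∈ s
  by_cases hm : ∃ y, e y = m
  · obtain ⟨y, rfl⟩ := hm
    obtain ⟨k, -, hk⟩ := mem_image.1 y.2
    rw [show g (e y) = y from e.injective.extend_apply _ _ y, ← hk]
    exact Fintype.mem_piFinset.1 his k
  · rwa [show g m = b from Function.extend_apply' _ _ m hm]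

end Counting

section Moments

open Finset

variable {A : Type*} [Ring A] [StarRing A] [Algebra ℂ A] {T T' : ℕ → A} {φ : A →ₗ[ℂ] ℂ}

lemma map_prodT_eq_zero_of_unique_index {Q : Eps → Eps → ℕ → ℕ → ℝ}
    (hC1 : C1 φ T T') (hC3 : C3 φ T T') (hC4 : C4 T T' Q) {r : ℕ} (ε : Fin r → Eps)
    {i : Fin r → ℕ} {k : Fin r} (hk : ∀ l, i l = i k → l = k) :
    φ (prodT T T' ε i) = 0 := by
  rw [prodT_eq_wordProd]
  refine map_wordProd_eq_zero hC1 hC3 hC4 (m := i k) ?_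
  rw [List.ofFn_eq_map, List.filter_map, List.length_map, ← List.countP_eq_length_filter,
    ← List.count_finRange k, List.count]
  congr 1
  funext l
  exact decide_eq_decide.2 ⟨hk l, fun h => h ▸ rfl⟩

lemma exists_forall_norm_map_prodT_le (hC2 : C2 φ T T') (r : ℕ) :
    ∃ M, 0 ≤ M ∧ ∀ (ε : Fin r → Eps) (i : Fin r → ℕ), ‖φ (prodT T T' ε i)‖ ≤ M := by
  choose ρ hρ0 hρ using hC2 r
  have : Finite (Setoid (Fin r)) :=
    Finite.of_injective (fun π : Setoid (Fin r) => ⇑π) fun _ _ => Setoid.eq_iff_rel_eq.2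
  obtain ⟨M, hM⟩ := (Set.finite_range ρ).bddAbove
  exact ⟨M, (hρ0 ⊥).trans (hM ⟨⊥, rfl⟩),
    fun ε i => (hρ (Setoid.ker i) ε i fun _ _ => Iff.rfl).trans (hM ⟨Setoid.ker i, rfl⟩)⟩

lemma prod_ofFn_SN {r : ℕ} (ε : Fin r → Eps) (N : ℕ) :
    (List.ofFn fun j => SN T T' (ε j) N).prod = ((Real.sqrt N : ℂ))⁻¹ ^ r •
      ∑ i ∈ Fintype.piFinset fun _ : Fin r => Icc 1 N, prodT T T' ε i := by
  have h := (MultilinearMap.mkPiAlgebraFin ℂ r A).map_smul_univ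
    (fun _ => ((Real.sqrt N : ℂ))⁻¹) fun j => ∑ k ∈ Icc 1 N, Teps T T' (ε j) k
  rw [MultilinearMap.map_sum_finset] at h
  simpa [MultilinearMap.mkPiAlgebraFin_apply, prodT, SN] using h

lemma norm_map_prod_SN_le {Q : Eps → Eps → ℕ → ℕ → ℝ}
    (hC1 : C1 φ T T') (hC3 : C3 φ T T') (hC4 : C4 T T' Q) {n : ℕ} {M : ℝ} (hM0 : 0 ≤ M)
    (hM : ∀ (ε : Fin (2 * n + 1) → Eps) (i : Fin (2 * n + 1) → ℕ), ‖φ (prodT T T' ε i)‖ ≤ M)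
    (ε : Fin (2 * n + 1) → Eps) {N : ℕ} (hN : 1 ≤ N) :
    ‖φ ((List.ofFn fun j => SN T T' (ε j) N).prod)‖ ≤
      (n ^ (2 * n + 1) * M) * (Real.sqrt N)⁻¹ := by
  set S := {i ∈ Fintype.piFinset fun _ : Fin (2 * n + 1) => Icc 1 N |
    ∀ k, ∃ l ≠ k, i l = i k}
  have hexpand : φ ((List.ofFn fun j => SN T T' (ε j) N).prod) =
      ((Real.sqrt N : ℂ))⁻¹ ^ (2 * n + 1) * ∑ i ∈ S, φ (prodT T T' ε i) := by
    rw [prod_ofFn_SN, map_smul, map_sum, smul_eq_mul, sum_filter_of_ne]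
    intro i _ hi
    contrapose! hi
    obtain ⟨k, hk⟩ := hi
    exact map_prodT_eq_zero_of_unique_index hC1 hC3 hC4 ε fun l hl =>
      by_contra fun hlk => hk l hlk hl
  have hcard : (#S : ℝ) ≤ n ^ (2 * n + 1) * N ^ n := by
    have hS : #S ≤ n ^ (2 * n + 1) * #(Icc 1 N) ^ n :=
      (card_le_card (monotone_filter_right _ fun i _ hi =>
        by have := two_mul_card_image_le hi; omega)).trans
      (card_filter_card_image_le (nonempty_Icc.2 hN) _ n)
    exact_mod_cast (by simpa using hS)
  have hsqrt : Real.sqrt N ^ (2 * n + 1) = N ^ n * Real.sqrt N := by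
    rw [pow_succ, pow_mul, Real.sq_sqrt (Nat.cast_nonneg N)]
  have hsqrt_pos : 0 < Real.sqrt N := Real.sqrt_pos.2 (by exact_mod_cast hN)
  calc ‖φ ((List.ofFn fun j => SN T T' (ε j) N).prod)‖
      ≤ (Real.sqrt N)⁻¹ ^ (2 * n + 1) * (#S * M) := by
        rw [hexpand, norm_mul, norm_pow, norm_inv, Complex.norm_real, Real.norm_of_nonneg
          hsqrt_pos.le]
        gcongr
        simpa using norm_sum_le_of_le S fun i _ => hM ε i
    _ ≤ (Real.sqrt N)⁻¹ ^ (2 * n + 1) * ((n ^ (2 * n + 1) * N ^ n) * M) := by gcongr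
    _ = (n ^ (2 * n + 1) * M) * (Real.sqrt N)⁻¹ := by
        rw [inv_pow, hsqrt]
        field_simp

end Moments

theorem stmt1_general {A : Type*} [Ring A] [Algebra ℂ A] [StarRing A]
    (φ : A →ₗ[ℂ] ℂ) (T T' : ℕ → A) (Q : Eps → Eps → ℕ → ℕ → ℝ)
    (hC1 : C1 φ T T') (hC2 : C2 φ T T') (hC3 : C3 φ T T') (hC4 : C4 T T' Q)
    (r : ℕ) (hr : Odd r) (ε : Fin r → Eps) :
    Tendsto (fun N => φ ((List.ofFn fun j : Fin r => SN T T' (ε j) N).prod))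
      atTop (nhds 0) := by
  obtain ⟨n, rfl⟩ := hr
  obtain ⟨M, hM0, hM⟩ := exists_forall_norm_map_prodT_le hC2 (2 * n + 1)
  have hlim : Tendsto (fun N : ℕ => (n ^ (2 * n + 1) * M) * (Real.sqrt N)⁻¹) atTop (nhds 0) := by
    simpa using (tendsto_inv_atTop_zero.comp
      (Real.tendsto_sqrt_atTop.comp tendsto_natCast_atTop_atTop)).const_mul (n ^ (2 * n + 1) * M)
  refine squeeze_zero_norm' ?_ hlim
  filter_upwards [eventually_ge_atTop 1] with N hN
  exact norm_map_prod_SN_le hC1 hC3 hC4 hM0 hM ε hN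

/-- CLT of type B, odd case: under conditions (C1)–(C4), for every odd
`r ≥ 1` and every `ε ∈ {1,∗,′}^r`, the moments `φ(S_N^{ε(1)} ⋯ S_N^{ε(r)})` tend to `0`. -/
theorem stmt1 {A : Type*} [Ring A] [Algebra ℂ A] [StarRing A]
    (φ : A →ₗ[ℂ] ℂ) (hφ1 : φ 1 = 1) (T T' : ℕ → A) (Q : Eps → Eps → ℕ → ℕ → ℝ)
    (hC1 : C1 φ T T') (hC2 : C2 φ T T') (hC3 : C3 φ T T') (hC4 : C4 T T' Q)
    (r : ℕ) (hr1 : 1 ≤ r) (hr : Odd r) (ε : Fin r → Eps) :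
    Tendsto (fun N => φ ((List.ofFn fun j : Fin r => SN T T' (ε j) N).prod))
      atTop (nhds 0) :=
  stmt1_general φ T T' Q hC1 hC2 hC3 hC4 r hr ε
end

section
/- Let (A,φ) with operators T_i, T_i^*, T_i′ satisfy conditions (C1), (C3) and (C4). Let π be a pair partition of [2n], ε ∈ {1,*,′}^{2n}, and i ∈ ℕ^{2n} a tuple with ker i = π. If there exists a block {z,w} ∈ π with z < w such that (ε(z),ε(w)) ∉ {(*,1),(*,′)}, then φ(T_{i(1)}^{ε(1)} ⋯ T_{i(2n)}^{ε(2n)}) = 0. Equivalently, φ(T_{i(1)}^{ε(1)} ⋯ T_{i(2n)}^{ε(2n)}) ≠ 0 is possible only if there is a coloring f making (π,f) an element of P^B_{2,ε}(2n). -/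
open Filter
open scoped BigOperators Classical

/-! Letters with different indices commute up to scalar factors (C4), so a word can be
regrouped into blocks of equal index while only being multiplied by a scalar; the relative
order inside each block is kept. By (C3) the moment of the regrouped word factors over the
blocks, and when the index pattern is a pair partition, the block of a pair `{z, w}` is the
second moment `φ(T_k^{ε(z)} T_k^{ε(w)})`, which (C1) kills unless `(ε(z), ε(w))` is
`(∗, 1)` or `(∗, ′)`. -/

section Regroup

variable {R A β ι : Type*} [Monoid R] [Monoid A] [MulAction R A] [IsScalarTower R A A]
  [SMulCommClass R A A] {F : β → A} {κ : β → ι}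

theorem exists_smul_mul_prod_comm
    (hF : ∀ x y, κ x ≠ κ y → ∃ q : R, F x * F y = q • (F y * F x)) (x : β) (g : List β)
    (hg : ∀ y ∈ g, κ y ≠ κ x) :
    ∃ c : R, F x * (g.map F).prod = c • ((g.map F).prod * F x) := by
  induction g with
  | nil => exact ⟨1, by simp⟩
  | cons y t ih =>
    obtain ⟨c, hc⟩ := ih fun z hz => hg z (List.mem_cons_of_mem _ hz)
    obtain ⟨q, hq⟩ := hF x y (hg y List.mem_cons_self).symm
    refine ⟨q * c, ?_⟩
    calc F x * ((y :: t).map F).prod = (F x * F y) * (t.map F).prod := by simp [mul_assoc]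
      _ = q • (F y * (F x * (t.map F).prod)) := by rw [hq, smul_mul_assoc, mul_assoc]
      _ = (q * c) • (((y :: t).map F).prod * F x) := by
        rw [hc, mul_smul_comm, smul_smul]; simp [mul_assoc]

theorem exists_smul_prod_eq_prod_filter_mul_prod_filter [DecidableEq ι]
    (hF : ∀ x y, κ x ≠ κ y → ∃ q : R, F x * F y = q • (F y * F x)) (m : ι) (L : List β) :
    ∃ c : R, (L.map F).prod =
      c • (((L.filter (κ · = m)).map F).prod * ((L.filter (κ · ≠ m)).map F).prod) := by
  induction L with
  | nil => exact ⟨1, by simp⟩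
  | cons x t ih =>
    obtain ⟨c, hc⟩ := ih
    by_cases hx : κ x = m
    · have heq : (x :: t).filter (κ · = m) = x :: t.filter (κ · = m) := by
        simp [hx]
      have hne : (x :: t).filter (κ · ≠ m) = t.filter (κ · ≠ m) := by
        simp [hx]
      refine ⟨c, ?_⟩
      rw [heq, hne, List.map_cons, List.prod_cons, List.map_cons, List.prod_cons, hc,
        mul_smul_comm, mul_assoc]
    · have heq : (x :: t).filter (κ · = m) = t.filter (κ · = m) := by
        simp [hx]
      have hne : (x :: t).filter (κ · ≠ m) = x :: t.filter (κ · ≠ m) := by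
        simp [hx]
      have hkeys : ∀ y ∈ t.filter (κ · = m), κ y ≠ κ x := by
        intro y hy
        have hym : κ y = m := by simpa using List.of_mem_filter hy
        exact hym ▸ Ne.symm hx
      obtain ⟨c', hc'⟩ := exists_smul_mul_prod_comm hF x _ hkeys
      refine ⟨c * c', ?_⟩
      rw [heq, hne, List.map_cons, List.prod_cons, List.map_cons, List.prod_cons, hc,
        mul_smul_comm, ← mul_assoc, hc', smul_mul_assoc, smul_smul, mul_assoc]

theorem exists_smul_prod_eq_prod_flatten_filter [DecidableEq ι]
    (hF : ∀ x y, κ x ≠ κ y → ∃ q : R, F x * F y = q • (F y * F x)) (K : List ι)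
    (hK : K.Nodup) (L : List β) (hL : ∀ x ∈ L, κ x ∈ K) :
    ∃ c : R, (L.map F).prod = c • (((K.map fun m => L.filter (κ · = m)).flatten).map F).prod := by
  induction K generalizing L with
  | nil =>
    obtain rfl : L = [] := List.eq_nil_iff_forall_not_mem.mpr fun x hx => by simpa using hL x hx
    exact ⟨1, by simp⟩
  | cons m K ih =>
    obtain ⟨hmK, hK⟩ := List.nodup_cons.mp hK
    obtain ⟨c, hc⟩ := exists_smul_prod_eq_prod_filter_mul_prod_filter hF m L
    have hL' : ∀ x ∈ L.filter (κ · ≠ m), κ x ∈ K := by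
      intro x hx
      obtain ⟨hxL, hxm⟩ := List.mem_filter.mp hx
      exact (List.mem_cons.mp (hL x hxL)).resolve_left (of_decide_eq_true hxm)
    obtain ⟨c', hc'⟩ := ih hK _ hL'
    have hgroups : (K.map fun m' => (L.filter (κ · ≠ m)).filter (κ · = m')) =
        K.map fun m' => L.filter (κ · = m') := by
      refine List.map_congr_left fun m' hm' => ?_
      rw [List.filter_filter]
      refine List.filter_congr fun x _ => ?_
      by_cases hx : κ x = m'
      · simp [hx, show m' ≠ m from fun h => hmK (h ▸ hm')]
      · simp [hx]
    refine ⟨c * c', ?_⟩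
    rw [hc, hc', hgroups, mul_smul_comm, smul_smul]
    simp

end Regroup

theorem filter_finRange_eq_pair {n : ℕ} {a b : Fin n} (hab : a < b) (P : Fin n → Bool)
    (hP : ∀ j, P j ↔ j = a ∨ j = b) : (List.finRange n).filter P = [a, b] := by
  refine List.Perm.eq_of_pairwise (le := (· < ·)) (fun x y _ _ hxy hyx => absurd hxy hyx.not_gt)
    ((List.pairwise_lt_finRange n).filter P) (by simp [hab]) ?_
  refine (List.perm_ext_iff_of_nodup ((List.nodup_finRange n).filter P) ?_).mpr fun j => ?_
  · simp [hab.ne]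
  · simp [hP]

theorem apply_prod_eq_zero_of_apply_group_eq_zero {A : Type*} [Ring A] [Algebra ℂ A]
    [StarRing A] {φ : A →ₗ[ℂ] ℂ} {T T' : ℕ → A}
    {Q : Eps → Eps → ℕ → ℕ → ℝ} (hC3 : C3 φ T T') (hC4 : C4 T T' Q) (w : List (Eps × ℕ))
    {m : ℕ} (hm : m ∈ w.map Prod.snd)
    (h0 : φ (((w.filter (·.2 = m)).map fun x => Teps T T' x.1 x.2).prod) = 0) :
    φ ((w.map fun x => Teps T T' x.1 x.2).prod) = 0 := by
  set G := (w.map Prod.snd).dedup.map fun m => w.filter (·.2 = m)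
  obtain ⟨c, hc⟩ := exists_smul_prod_eq_prod_flatten_filter (R := ℂ)
    (fun x y hxy => ⟨Q x.1 y.1 x.2 y.2, hC4 x.2 y.2 hxy x.1 y.1⟩) _ (List.nodup_dedup _) w
    fun x hx => List.mem_dedup.mpr (List.mem_map_of_mem hx)
  have hgroups : ∀ g ∈ G, g ≠ [] ∧ ∃ m, ∀ x ∈ g, x.2 = m := by
    simp only [G, List.mem_map, List.mem_dedup]
    rintro _ ⟨m, ⟨x, hx, rfl⟩, rfl⟩
    refine ⟨List.ne_nil_of_mem (List.mem_filter.mpr ⟨hx, by simp⟩), x.2, fun y hy => ?_⟩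
    simpa using List.of_mem_filter hy
  have hdistinct : G.Pairwise fun g₁ g₂ => ∀ x₁ ∈ g₁, ∀ x₂ ∈ g₂, x₁.2 ≠ x₂.2 := by
    refine List.pairwise_map.mpr ((List.nodup_dedup _).imp fun {m₁ m₂} hne x₁ hx₁ x₂ hx₂ => ?_)
    have h₁ : x₁.2 = m₁ := by simpa using List.of_mem_filter hx₁
    have h₂ : x₂.2 = m₂ := by simpa using List.of_mem_filter hx₂
    rwa [h₁, h₂]
  have hzero : (0 : ℂ) ∈ G.map fun g => φ ((g.map fun x => Teps T T' x.1 x.2).prod) :=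
    List.mem_map.mpr ⟨_, List.mem_map_of_mem (List.mem_dedup.mpr hm), h0⟩
  rw [hc, map_smul, hC3 G hgroups hdistinct, List.prod_eq_zero hzero, smul_zero]

theorem filter_ofFn_eq_pair_of_kerPair {α : Type*} {m : ℕ} {p : Fin m → Fin m}
    (hp : IsPairing p) {i : Fin m → ℕ} (hker : kerPair i p) (ε : Fin m → α) {z : Fin m}
    (hz : z < p z) :
    (List.ofFn fun j => (ε j, i j)).filter (·.2 = i z) = [(ε z, i z), (ε (p z), i (p z))] := by
  have hpartner : ∀ j, i j = i z ↔ j = z ∨ j = p z := fun j => by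
    rw [hker j z]
    exact or_congr_right ⟨fun h => h ▸ ((hp j).1).symm, fun h => h ▸ (hp z).1⟩
  rw [List.ofFn_eq_map, List.filter_map,
    filter_finRange_eq_pair hz _ fun j => by simpa using hpartner j]
  rfl

theorem stmt5_general {A : Type*} [Ring A] [Algebra ℂ A] [StarRing A]
    (φ : A →ₗ[ℂ] ℂ) (T T' : ℕ → A) (Q : Eps → Eps → ℕ → ℕ → ℝ)
    (hC1 : C1 φ T T') (hC3 : C3 φ T T') (hC4 : C4 T T' Q)
    (n : ℕ) (p : Fin (2 * n) → Fin (2 * n)) (hp : IsPairing p)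
    (ε : Fin (2 * n) → Eps) (i : Fin (2 * n) → ℕ) (hker : kerPair i p)
    (hbad : ∃ z : Fin (2 * n), z < p z ∧
      ¬ (ε z = Eps.star ∧ (ε (p z) = Eps.one ∨ ε (p z) = Eps.prime))) :
    φ (prodT T T' ε i) = 0 := by
  obtain ⟨z, hz, hzbad⟩ := hbad
  have hword : prodT T T' ε i =
      ((List.ofFn fun j => (ε j, i j)).map fun x => Teps T T' x.1 x.2).prod := by
    rw [List.map_ofFn]; rfl
  have hpair : i (p z) = i z := (hker (p z) z).mpr (Or.inr (hp z).1)
  rw [hword]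
  refine apply_prod_eq_zero_of_apply_group_eq_zero hC3 hC4 _
    (List.mem_map.mpr ⟨(ε z, i z), List.mem_ofFn.mpr ⟨z, rfl⟩, rfl⟩) ?_
  rw [filter_ofFn_eq_pair_of_kerPair hp hker ε hz]
  simpa [hpair] using hC1.2 (i z) (ε z) (ε (p z)) hzbad

/-- under (C1), (C3), (C4), if `ker i` is a pair partition `π` and some
block `{z,w}` (with `z < w`) has `(ε(z), ε(w)) ∉ {(∗,1),(∗,′)}`, then the corresponding
moment vanishes; i.e. a nonzero moment forces a coloring `f` with `(π,f) ∈ P^B_{2,ε}`. -/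
theorem stmt5 {A : Type*} [Ring A] [Algebra ℂ A] [StarRing A]
    (φ : A →ₗ[ℂ] ℂ) (hφ1 : φ 1 = 1) (T T' : ℕ → A) (Q : Eps → Eps → ℕ → ℕ → ℝ)
    (hC1 : C1 φ T T') (hC3 : C3 φ T T') (hC4 : C4 T T' Q)
    (n : ℕ) (p : Fin (2 * n) → Fin (2 * n)) (hp : IsPairing p)
    (ε : Fin (2 * n) → Eps) (i : Fin (2 * n) → ℕ) (hker : kerPair i p)
    (hbad : ∃ z : Fin (2 * n), z < p z ∧
      ¬ (ε z = Eps.star ∧ (ε (p z) = Eps.one ∨ ε (p z) = Eps.prime))) :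
    φ (prodT T T' ε i) = 0 :=
  stmt5_general φ T T' Q hC1 hC3 hC4 n p hp ε i hker hbad
end

section
/- Let A be a unital complex *-algebra containing operators T_i, T_i^*, T_i′ (i ∈ ℕ) satisfying the commutation condition (C4) with real coefficients Q_{ε,ε′}(i,j). Let π_f ∈ P^B_{2,ε}(2n) have blocks {z_1,w_1},…,{z_n,w_n} with z_j < w_j and w_1 < ⋯ < w_n, and let i ∈ ℕ^{2n} be a tuple with ker i = π. Then T_{i(1)}^{ε(1)} ⋯ T_{i(2n)}^{ε(2n)} = Ξ(π_f,i) · (T_{i(z_1)}^* T_{i(w_1)}^{ε(w_1)}) ⋯ (T_{i(z_n)}^* T_{i(w_n)}^{ε(w_n)}). -/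
open Filter
open scoped BigOperators Classical

/-!
Give the left leg `z` of a block `{z, w}` the key `2w` and the right leg `w` the key `2w + 1`:
sorted by key, the word becomes the product of the blocks in the order of their right legs.
Sorting by insertion swaps the letters at positions `a < b` exactly when `key b < key a`; such
letters lie in different blocks, so their indices differ and (C4) contributes the factor
`Q_{ε(a),ε(b)}(i(a), i(b))`. The inverted pairs are a left leg `a` followed either by the left leg
of a block nested in the block of `a`, or by the right leg `w` of a block that is nested in or
crosses the block of `a` and ends before it; these give exactly the factors of `Ξ(π_f, i)`.
-/

open Function

section Reordering

variable {R A α β : Type*} [CommMonoid R] [Monoid A] [MulAction R A]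
  [IsScalarTower R A A] [SMulCommClass R A A] [LinearOrder β]

def inversionProd (q : α → α → R) (key : α → β) : List α → R
  | [] => 1
  | a :: t => (t.map fun b => if key b < key a then q a b else 1).prod * inversionProd q key t

theorem inversionProd_map {γ : Type*} (q : α → α → R) (key : α → β) (g : γ → α) :
    ∀ L : List γ, inversionProd q key (L.map g) =
      inversionProd (fun a b => q (g a) (g b)) (key ∘ g) L
  | [] => rfl
  | a :: t => by simp [inversionProd, inversionProd_map q key g t, Function.comp_def]

theorem inversionProd_finRange {m : ℕ} (q : Fin m → Fin m → R) (key : Fin m → β) :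
    inversionProd q key (List.finRange m) =
      ∏ a, ∏ b, if a < b ∧ key b < key a then q a b else 1 := by
  induction m with
  | zero => rfl
  | succ m ih =>
    rw [List.finRange_succ, inversionProd, inversionProd_map, ih]
    simp [Fin.prod_univ_succ, Fin.prod_univ_def, Function.comp_def, Fin.succ_pos]

theorem mul_prod_map_eq_smul_orderedInsert (x : α → A) (q : α → α → R) (key : α → β) (a : α) :
    ∀ S : List α, S.Pairwise (key · ≤ key ·) →
      (∀ b ∈ S, key b < key a → x a * x b = q a b • (x b * x a)) →
      x a * (S.map x).prod =
        (S.map fun b => if key b < key a then q a b else 1).prod •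
          ((S.orderedInsert (key · ≤ key ·) a).map x).prod
  | [], _, _ => by simp
  | b :: S, hS, hcomm => by
    rw [List.pairwise_cons] at hS
    by_cases hab : key a ≤ key b
    · have hone : ((b :: S).map fun c => if key c < key a then q a c else 1).prod = 1 :=
        List.prod_eq_one <| by
          simp only [List.mem_map, List.mem_cons]
          rintro _ ⟨c, hc, rfl⟩
          exact if_neg <| not_lt.2 <| hc.elim (· ▸ hab) fun hc => hab.trans (hS.1 c hc)
      rw [List.orderedInsert_cons, if_pos hab, hone, one_smul]
      simp
    · have hba : key b < key a := not_le.1 hab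
      have ih := mul_prod_map_eq_smul_orderedInsert x q key a S hS.2
        fun c hc => hcomm c (List.mem_cons_of_mem _ hc)
      calc x a * ((b :: S).map x).prod = (x a * x b) * (S.map x).prod := by simp [mul_assoc]
        _ = q a b • (x b * (x a * (S.map x).prod)) := by
          rw [hcomm b List.mem_cons_self hba, smul_mul_assoc, mul_assoc]
        _ = _ := by
          rw [ih, mul_smul_comm, smul_smul]
          simp [hab, hba]

theorem prod_map_eq_inversionProd_smul_insertionSort (x : α → A) (q : α → α → R)
    (key : α → β) : ∀ L : List α,
      L.Pairwise (fun u v => key v < key u → x u * x v = q u v • (x v * x u)) →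
      (L.map x).prod = inversionProd q key L •
        ((L.insertionSort (key · ≤ key ·)).map x).prod
  | [], _ => by simp [inversionProd]
  | a :: t, hL => by
    have : Std.Total (key · ≤ key · : α → α → Prop) := ⟨fun u v => le_total _ _⟩
    have : IsTrans α (key · ≤ key ·) := ⟨fun _ _ _ => le_trans⟩
    rw [List.pairwise_cons] at hL
    have hperm := List.perm_insertionSort (key · ≤ key ·) t
    rw [List.map_cons, List.prod_cons, prod_map_eq_inversionProd_smul_insertionSort x q key t hL.2,
      mul_smul_comm, mul_prod_map_eq_smul_orderedInsert x q key a _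
        (List.pairwise_insertionSort _ t) fun b hb => hL.1 b (hperm.subset hb),
      (hperm.map _).prod_eq, smul_smul, mul_comm, List.insertionSort_cons, inversionProd]

theorem prod_map_eq_inversionProd_smul_of_perm (x : α → A) (q : α → α → R) {key : α → β}
    (hkey : Injective key) {L L' : List α} (hL : L.Perm L')
    (hL' : L'.Pairwise (key · < key ·))
    (hcomm : L.Pairwise fun u v => key v < key u → x u * x v = q u v • (x v * x u)) :
    (L.map x).prod = inversionProd q key L • (L'.map x).prod := by
  have : Std.Total (key · ≤ key · : α → α → Prop) := ⟨fun u v => le_total _ _⟩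
  have : IsTrans α (key · ≤ key ·) := ⟨fun _ _ _ => le_trans⟩
  rw [prod_map_eq_inversionProd_smul_insertionSort x q key L hcomm,
    ((List.perm_insertionSort _ L).trans hL).eq_of_pairwise
      (fun _ _ _ _ h h' => hkey (le_antisymm h h')) (List.pairwise_insertionSort _ L)
      (hL'.imp le_of_lt)]

end Reordering

section Pairing

variable {m : ℕ} {p : Fin m → Fin m}

theorem IsPairing.involutive (hp : IsPairing p) : Involutive p := fun k => (hp k).1

theorem IsPairing.prod_eq_prod_blocks {M : Type*} [CommMonoid M] (hp : IsPairing p)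
    (g : Fin m → M) : ∏ k, g k = ∏ k, if k < p k then g k * g (p k) else 1 := by
  calc ∏ k, g k = ∏ k, (if k < p k then g k else 1) * (if p k < k then g k else 1) := by
        refine Finset.prod_congr rfl fun k _ => ?_
        rcases lt_or_gt_of_ne (hp k).2 with h | h <;> simp [h, not_lt_of_gt h]
    _ = (∏ k, if k < p k then g k else 1) * ∏ k, if k < p k then g (p k) else 1 := by
        rw [Finset.prod_mul_distrib,
          ← Equiv.prod_comp (hp.involutive.toPerm _) fun k => if p k < k then g k else 1]
        simp [hp.involutive _]
    _ = ∏ k, if k < p k then g k * g (p k) else 1 := by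
        rw [← Finset.prod_mul_distrib]
        exact Finset.prod_congr rfl fun k _ => by split_ifs <;> simp

def pairKey (p : Fin m → Fin m) (k : Fin m) : ℕ := if k < p k then 2 * p k else 2 * k + 1

theorem pairKey_of_lt {k : Fin m} (h : k < p k) : pairKey p k = 2 * p k := if_pos h

theorem pairKey_of_gt {k : Fin m} (h : p k < k) : pairKey p k = 2 * k + 1 :=
  if_neg (not_lt_of_gt h)

theorem IsPairing.pairKey_apply_of_lt (hp : IsPairing p) {k : Fin m} (h : k < p k) :
    pairKey p (p k) = 2 * p k + 1 :=
  pairKey_of_gt (by rwa [hp.involutive k])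

theorem IsPairing.pairKey_injective (hp : IsPairing p) : Injective (pairKey p) := by
  intro a b hab
  rcases lt_or_gt_of_ne (hp a).2 with ha | ha <;> rcases lt_or_gt_of_ne (hp b).2 with hb | hb
  · rw [pairKey_of_gt ha, pairKey_of_gt hb] at hab
    exact Fin.ext (by omega)
  · rw [pairKey_of_gt ha, pairKey_of_lt hb] at hab
    omega
  · rw [pairKey_of_lt ha, pairKey_of_gt hb] at hab
    omega
  · rw [pairKey_of_lt ha, pairKey_of_lt hb] at hab
    exact hp.involutive.injective (Fin.ext (by omega))

def rightLegs (p : Fin m → Fin m) : List (Fin m) :=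
  (List.finRange m).filter fun k => decide (p k < k)

def blockOrder (p : Fin m → Fin m) : List (Fin m) :=
  (rightLegs p).flatMap fun k => [p k, k]

theorem prod_map_blockOrder {M : Type*} [Monoid M] (g : Fin m → M) :
    ((blockOrder p).map g).prod = ((rightLegs p).map fun k => g (p k) * g k).prod := by
  simp [blockOrder, List.flatMap_def, List.prod_flatten, Function.comp_def]

theorem IsPairing.mem_blockOrder (hp : IsPairing p) (u : Fin m) : u ∈ blockOrder p := by
  simp only [blockOrder, rightLegs, List.mem_flatMap, List.mem_filter, List.mem_finRange,
    true_and, decide_eq_true_eq, List.mem_cons, List.not_mem_nil, or_false]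
  rcases lt_or_gt_of_ne (hp u).2 with h | h
  · exact ⟨u, h, Or.inr rfl⟩
  · exact ⟨p u, by rwa [hp.involutive u], Or.inl (hp.involutive u).symm⟩

theorem IsPairing.pairwise_pairKey_blockOrder (hp : IsPairing p) :
    (blockOrder p).Pairwise (pairKey p · < pairKey p ·) := by
  have hkeys : ∀ k, p k < k → pairKey p (p k) = 2 * k ∧ pairKey p k = 2 * k + 1 := fun k hk =>
    ⟨by rw [pairKey_of_lt (by rwa [hp.involutive k]), hp.involutive k], pairKey_of_gt hk⟩
  refine List.pairwise_flatMap.2 ⟨fun k hk => ?_, ?_⟩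
  · have hk := hkeys k (by simpa [rightLegs] using hk)
    simp [hk.1, hk.2]
  · refine ((List.pairwise_lt_finRange m).sublist List.filter_sublist).imp_of_mem ?_
    intro k₁ k₂ h₁ h₂ hlt u₁ hu₁ u₂ hu₂
    have e₁ := hkeys k₁ (by simpa [rightLegs] using h₁)
    have e₂ := hkeys k₂ (by simpa [rightLegs] using h₂)
    have hlt' : (k₁ : ℕ) < k₂ := hlt
    simp only [List.mem_cons, List.not_mem_nil, or_false] at hu₁ hu₂
    rcases hu₁ with rfl | rfl <;> rcases hu₂ with rfl | rfl <;> omega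

theorem IsPairing.finRange_perm_blockOrder (hp : IsPairing p) :
    (List.finRange m).Perm (blockOrder p) :=
  (List.perm_ext_iff_of_nodup (List.nodup_finRange m)
    (hp.pairwise_pairKey_blockOrder.imp fun h e => h.ne (congrArg _ e))).2
    fun u => by simp [hp.mem_blockOrder u]

theorem kerPair.ne_of_pairKey_lt {i : Fin m → ℕ} (hker : kerPair i p) (hp : IsPairing p)
    {a b : Fin m} (hab : a < b) (hkey : pairKey p b < pairKey p a) : i a ≠ i b := by
  intro h
  rcases (hker a b).1 h with rfl | rfl
  · exact lt_irrefl a hab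
  · rw [pairKey_of_lt hab, hp.pairKey_apply_of_lt hab] at hkey
    omega

theorem IsPairing.prod_inversion_eq_Xi (hp : IsPairing p) {ε : Fin m → Eps} {f : Fin m → Bool}
    (hε : EpsCompat ε p f) (Q : Eps → Eps → ℕ → ℕ → ℝ) (i : Fin m → ℕ) :
    (∏ a, ∏ b, if a < b ∧ pairKey p b < pairKey p a then Q (ε a) (ε b) (i a) (i b) else 1) =
      Xi Q p f i := by
  rw [hp.prod_eq_prod_blocks, Xi, Finset.prod_comm, ← Finset.prod_mul_distrib]
  refine Finset.prod_congr rfl fun a _ => ?_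
  by_cases ha : a < p a
  swap
  · simp [ha]
  rw [if_pos ha, ← Finset.prod_mul_distrib, ← Finset.prod_mul_distrib, hp.prod_eq_prod_blocks]
  refine Finset.prod_congr rfl fun b _ => ?_
  by_cases hb : b < p b
  swap
  · simp [hb]
  -- Between the blocks of the left legs `a` and `b` only `(a, b)` and `(a, p b)` can be inverted:
  -- together they give the nesting factor of `(a, b)` or the crossing factor of `(b, a)`.
  have ha' : (a : ℕ) < p a := ha
  have hb' : (b : ℕ) < p b := hb
  have hpab : (a : ℕ) = b → (p a : ℕ) = p b := fun h => by rw [Fin.ext h]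
  simp only [pairKey_of_lt ha, pairKey_of_lt hb, hp.pairKey_apply_of_lt ha,
    hp.pairKey_apply_of_lt hb, (hε a ha).1, (hε b hb).1, (hε b hb).2, ha, hb, true_and,
    Fin.lt_def]
  split_ifs <;> first | omega | simp

end Pairing

theorem stmt6_general {A : Type*} [Ring A] [Algebra ℂ A] [StarRing A]
    (T T' : ℕ → A) (Q : Eps → Eps → ℕ → ℕ → ℝ) (hC4 : C4 T T' Q)
    (n : ℕ) (p : Fin (2 * n) → Fin (2 * n)) (f : Fin (2 * n) → Bool)
    (hp : IsPairing p)
    (ε : Fin (2 * n) → Eps) (hε : EpsCompat ε p f)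
    (i : Fin (2 * n) → ℕ) (hker : kerPair i p) :
    prodT T T' ε i
      = ((Xi Q p f i : ℝ) : ℂ) •
        ((((List.finRange (2 * n)).filter fun k => decide (p k < k)).map
            fun k => star (T (i (p k))) * Teps T T' (ε k) (i k)).prod) := by
  set x : Fin (2 * n) → A := fun k => Teps T T' (ε k) (i k)
  have hcomm : (List.finRange (2 * n)).Pairwise fun a b => pairKey p b < pairKey p a →
      x a * x b = Q (ε a) (ε b) (i a) (i b) • (x b * x a) :=
    (List.pairwise_lt_finRange _).imp fun hab hkey => by
      rw [← Complex.coe_smul]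
      exact hC4 _ _ (hker.ne_of_pairKey_lt hp hab hkey) _ _
  have hblocks : (rightLegs p).map (fun k => x (p k) * x k) =
      (rightLegs p).map fun k => star (T (i (p k))) * Teps T T' (ε k) (i k) :=
    List.map_congr_left fun k hk => by
      have hk : p k < k := by simpa [rightLegs] using hk
      simp [x, (hε (p k) (by rwa [hp.involutive k])).1, Teps]
  calc prodT T T' ε i = ((List.finRange (2 * n)).map x).prod := by
        simp [prodT, List.ofFn_eq_map, x]
    _ = _ := by
      rw [prod_map_eq_inversionProd_smul_of_perm x _ hp.pairKey_injective
        hp.finRange_perm_blockOrder hp.pairwise_pairKey_blockOrder hcomm,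
        inversionProd_finRange, hp.prod_inversion_eq_Xi hε, prod_map_blockOrder, hblocks,
        Complex.coe_smul, rightLegs]

/-- under the commutation condition (C4), for `π_f ∈ P^B_{2,ε}(2n)` and a
tuple `i` with `ker i = π`, the word `T_{i(1)}^{ε(1)} ⋯ T_{i(2n)}^{ε(2n)}` equals
`Ξ(π_f,i)` times the product `(T_{i(z_1)}^* T_{i(w_1)}^{ε(w_1)}) ⋯ (T_{i(z_n)}^* T_{i(w_n)}^{ε(w_n)})`
of the blocks, taken in the increasing order of the right legs `w_1 < ⋯ < w_n`
(the list `(List.finRange (2n)).filter (p · < ·)` enumerates the right legs in increasing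
order). -/
theorem stmt6 {A : Type*} [Ring A] [Algebra ℂ A] [StarRing A]
    (T T' : ℕ → A) (Q : Eps → Eps → ℕ → ℕ → ℝ) (hC4 : C4 T T' Q)
    (n : ℕ) (p : Fin (2 * n) → Fin (2 * n)) (f : Fin (2 * n) → Bool)
    (hp : IsPairing p) (hf : IsColoring p f)
    (ε : Fin (2 * n) → Eps) (hε : EpsCompat ε p f)
    (i : Fin (2 * n) → ℕ) (hker : kerPair i p) :
    prodT T T' ε i
      = ((Xi Q p f i : ℝ) : ℂ) •
        ((((List.finRange (2 * n)).filter fun k => decide (p k < k)).map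
            fun k => star (T (i (p k))) * Teps T T' (ε k) (i k)).prod) :=
  stmt6_general T T' Q hC4 n p f hp ε hε i hker
end

section
/- Let (A,φ) with operators T_i, T_i^*, T_i′ satisfy conditions (C3) and (C4), and assume moreover that φ is positive, i.e. φ(a^*a) ≥ 0 for all a ∈ A. Then Q_{1,1}(2,1) · Q_{*,1}(2,1) · φ(T_1^* T_1) · φ(T_2^* T_2) = φ((T_2T_1)^*(T_2T_1)) ≥ 0; in particular, if φ(T_1^*T_1) · φ(T_2^*T_2) > 0, then Q_{*,1}(2,1) · Q_{1,1}(2,1) ≥ 0. -/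
open Filter
open scoped BigOperators Classical

open scoped ComplexOrder

/-! Commuting `T_2` past `T_1` and then past `T_1^*` rewrites `(T_2T_1)^*(T_2T_1)` as
`Q_{1,1}(2,1) Q_{*,1}(2,1) • T_1^*T_1 T_2^*T_2`, and (C3) factorises the state of the latter.
Positivity of `φ` then forces the real coefficient to be nonnegative whenever
`φ(T_1^*T_1) φ(T_2^*T_2) > 0`. -/

theorem star_mul_mul_self_eq_smul {R A : Type*} [CommSemiring R] [Semiring A] [StarMul A]
    [Algebra R A] {a b : A} {q q' : R} (h : b * a = q • (a * b))
    (h' : star b * a = q' • (a * star b)) :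
    star (b * a) * (b * a) = (q * q') • (star a * a * (star b * b)) := by
  calc star (b * a) * (b * a) = q • (star a * (star b * a) * b) := by
        rw [star_mul, h, mul_smul_comm]; simp only [mul_assoc]
    _ = (q * q') • (star a * a * (star b * b)) := by
        rw [h', mul_smul_comm, smul_mul_assoc, smul_smul]; simp only [mul_assoc]

theorem C3.map_mul_of_ne {A : Type*} [Ring A] [Algebra ℂ A] [StarRing A]
    {φ : A →ₗ[ℂ] ℂ} {T T' : ℕ → A} (hC3 : C3 φ T T') {i j : ℕ} (hij : i ≠ j)
    (e e' f f' : Eps) :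
    φ (Teps T T' e i * Teps T T' e' i * (Teps T T' f j * Teps T T' f' j)) =
      φ (Teps T T' e i * Teps T T' e' i) * φ (Teps T T' f j * Teps T T' f' j) := by
  have hgroups : ∀ g ∈ [[(e, i), (e', i)], [(f, j), (f', j)]],
      g ≠ [] ∧ ∃ m, ∀ x ∈ g, Prod.snd x = m := by
    simp only [List.mem_cons, List.not_mem_nil, or_false]
    rintro g (rfl | rfl)
    · exact ⟨List.cons_ne_nil _ _, i, by simp⟩
    · exact ⟨List.cons_ne_nil _ _, j, by simp⟩
  have hdistinct : [[(e, i), (e', i)], [(f, j), (f', j)]].Pairwise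
      fun g₁ g₂ => ∀ x₁ ∈ g₁, ∀ x₂ ∈ g₂, Prod.snd x₁ ≠ Prod.snd x₂ := by
    simp only [List.pairwise_cons, List.mem_cons, List.not_mem_nil, or_false, Prod.forall,
      Prod.mk.injEq, forall_eq, IsEmpty.forall_iff, implies_true, List.Pairwise.nil, and_true]
    rintro _ _ (⟨-, rfl⟩ | ⟨-, rfl⟩) _ _ (⟨-, rfl⟩ | ⟨-, rfl⟩) <;> exact hij
  simpa [mul_assoc] using hC3 _ hgroups hdistinct

theorem Complex.nonneg_of_ofReal_mul_nonneg {q : ℝ} {c : ℂ} (h : 0 ≤ (q : ℂ) * c)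
    (hc : 0 < c) : 0 ≤ q := by
  have hc_real : c = (c.re : ℂ) := Complex.eq_re_of_ofReal_le hc.le
  rw [hc_real] at h hc
  rw [← Complex.ofReal_mul, Complex.zero_le_real] at h
  exact nonneg_of_mul_nonneg_left h (Complex.zero_lt_real.mp hc)

theorem stmt8_general {A : Type*} [Ring A] [Algebra ℂ A] [StarRing A]
    (φ : A →ₗ[ℂ] ℂ) (T T' : ℕ → A) (Q : Eps → Eps → ℕ → ℕ → ℝ)
    (hC3 : C3 φ T T') (hC4 : C4 T T' Q)
    (hpos : ∀ a : A, 0 ≤ φ (star a * a)) :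
    ((Q Eps.one Eps.one 2 1 : ℂ) * (Q Eps.star Eps.one 2 1 : ℂ) *
        (φ (star (T 1) * T 1) * φ (star (T 2) * T 2))
      = φ (star (T 2 * T 1) * (T 2 * T 1))) ∧
    (0 ≤ φ (star (T 2 * T 1) * (T 2 * T 1))) ∧
    (0 < φ (star (T 1) * T 1) * φ (star (T 2) * T 2) →
      0 ≤ Q Eps.star Eps.one 2 1 * Q Eps.one Eps.one 2 1) := by
  have h21 : (2 : ℕ) ≠ 1 := by norm_num
  have hmoment : φ (star (T 2 * T 1) * (T 2 * T 1)) =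
      (Q Eps.one Eps.one 2 1 : ℂ) * (Q Eps.star Eps.one 2 1 : ℂ) *
        (φ (star (T 1) * T 1) * φ (star (T 2) * T 2)) := by
    rw [star_mul_mul_self_eq_smul (a := T 1) (b := T 2) (hC4 2 1 h21 .one .one)
      (hC4 2 1 h21 .star .one), map_smul, smul_eq_mul]
    congr 1
    exact hC3.map_mul_of_ne h21.symm .star .one .star .one
  refine ⟨hmoment.symm, hpos _, fun hc => Complex.nonneg_of_ofReal_mul_nonneg ?_ hc⟩
  rw [Complex.ofReal_mul, mul_comm (Q Eps.star Eps.one 2 1 : ℂ), ← hmoment]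
  exact hpos _

/-- under (C3), (C4) and positivity of `φ`, one has
`Q_{1,1}(2,1)·Q_{∗,1}(2,1)·φ(T_1^*T_1)·φ(T_2^*T_2) = φ((T_2T_1)^*(T_2T_1)) ≥ 0`;
in particular if `φ(T_1^*T_1)·φ(T_2^*T_2) > 0` then `Q_{∗,1}(2,1)·Q_{1,1}(2,1) ≥ 0`. -/
theorem stmt8 {A : Type*} [Ring A] [Algebra ℂ A] [StarRing A]
    (φ : A →ₗ[ℂ] ℂ) (hφ1 : φ 1 = 1) (T T' : ℕ → A) (Q : Eps → Eps → ℕ → ℕ → ℝ)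
    (hC3 : C3 φ T T') (hC4 : C4 T T' Q)
    (hpos : ∀ a : A, 0 ≤ φ (star a * a)) :
    ((Q Eps.one Eps.one 2 1 : ℂ) * (Q Eps.star Eps.one 2 1 : ℂ) *
        (φ (star (T 1) * T 1) * φ (star (T 2) * T 2))
      = φ (star (T 2 * T 1) * (T 2 * T 1))) ∧
    (0 ≤ φ (star (T 2 * T 1) * (T 2 * T 1))) ∧
    (0 < φ (star (T 1) * T 1) * φ (star (T 2) * T 2) →
      0 ≤ Q Eps.star Eps.one 2 1 * Q Eps.one Eps.one 2 1) :=
  stmt8_general φ T T' Q hC3 hC4 hpos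
end

section
/- Let (A,φ) with operators T_i, T_i^*, T_i′ satisfy conditions (C3) and (C4). Then φ(T_1^*T_1) · φ(T_2^*T_2) · (Q_{*,*}(2,1) · Q_{*,1}(2,1) · Q_{1,*}(2,1) · Q_{1,1}(2,1) − 1) = 0; in particular, if φ(T_1^*T_1) · φ(T_2^*T_2) ≠ 0, then Q_{*,*}(2,1) · Q_{*,1}(2,1) · Q_{1,*}(2,1) · Q_{1,1}(2,1) = 1. -/
open Filter
open scoped BigOperators Classical

/-! Comparing `φ(T₂^*T₂ T₁^*T₁)` with `φ(T₁^*T₁ T₂^*T₂)`: by (C3) both factor as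
`φ(T₁^*T₁) φ(T₂^*T₂)`, while by (C4) moving `T₂^*T₂` past `T₁^*T₁` produces the factor
`Q_{∗,∗}(2,1) Q_{∗,1}(2,1) Q_{1,∗}(2,1) Q_{1,1}(2,1)`. -/

section QCommute

variable {R A : Type*} [CommSemiring R] [Semiring A] [Algebra R A]

theorem mul_mul_eq_smul_of_qcommute {x y z : A} {q r : R}
    (hy : x * y = q • (y * x)) (hz : x * z = r • (z * x)) :
    x * (y * z) = (q * r) • (y * z * x) := by
  rw [← mul_assoc, hy, smul_mul_assoc, mul_assoc, hz, mul_smul_comm, smul_smul, mul_assoc]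

theorem mul_mul_mul_eq_smul_of_qcommute {x₁ x₂ y₁ y₂ : A} {q₁₁ q₁₂ q₂₁ q₂₂ : R}
    (h₁₁ : x₁ * y₁ = q₁₁ • (y₁ * x₁)) (h₁₂ : x₁ * y₂ = q₁₂ • (y₂ * x₁))
    (h₂₁ : x₂ * y₁ = q₂₁ • (y₁ * x₂)) (h₂₂ : x₂ * y₂ = q₂₂ • (y₂ * x₂)) :
    x₁ * x₂ * (y₁ * y₂) = (q₁₁ * q₁₂ * q₂₁ * q₂₂) • (y₁ * y₂ * (x₁ * x₂)) := by
  rw [mul_assoc, mul_mul_eq_smul_of_qcommute h₂₁ h₂₂, mul_smul_comm, ← mul_assoc,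
    mul_mul_eq_smul_of_qcommute h₁₁ h₁₂, smul_mul_assoc, smul_smul]
  simp only [mul_assoc, mul_comm (q₂₁ * q₂₂)]

end QCommute

section Conditions

variable {A : Type*} [Ring A] [Algebra ℂ A] [StarRing A] {T T' : ℕ → A}

theorem C3.map_mul_mul_of_ne {φ : A →ₗ[ℂ] ℂ} (hC3 : C3 φ T T') {m n : ℕ} (hmn : m ≠ n)
    (a b c d : Eps) :
    φ (Teps T T' a m * Teps T T' b m * (Teps T T' c n * Teps T T' d n)) =
      φ (Teps T T' a m * Teps T T' b m) * φ (Teps T T' c n * Teps T T' d n) := by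
  have h := hC3 [[(a, m), (b, m)], [(c, n), (d, n)]]
    (fun g hg => by
      simp only [List.mem_cons, List.not_mem_nil, or_false] at hg
      rcases hg with rfl | rfl
      · exact ⟨by simp, m, by simp⟩
      · exact ⟨by simp, n, by simp⟩)
    (List.pairwise_pair.mpr fun x₁ hx₁ x₂ hx₂ => by
      simp only [List.mem_cons, List.not_mem_nil, or_false] at hx₁ hx₂
      rcases hx₁ with rfl | rfl <;> rcases hx₂ with rfl | rfl <;> exact hmn)
  simpa [mul_assoc] using h

theorem C4.mul_mul_eq_smul {Q : Eps → Eps → ℕ → ℕ → ℝ} (hC4 : C4 T T' Q) {i j : ℕ}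
    (hij : i ≠ j) (a b c d : Eps) :
    Teps T T' a j * Teps T T' b j * (Teps T T' c i * Teps T T' d i) =
      ((Q a c j i * Q a d j i * Q b c j i * Q b d j i : ℝ) : ℂ) •
        (Teps T T' c i * Teps T T' d i * (Teps T T' a j * Teps T T' b j)) := by
  push_cast
  exact mul_mul_mul_eq_smul_of_qcommute (hC4 j i hij.symm a c) (hC4 j i hij.symm a d)
    (hC4 j i hij.symm b c) (hC4 j i hij.symm b d)

end Conditions

theorem stmt9_general {A : Type*} [Ring A] [Algebra ℂ A] [StarRing A]
    (φ : A →ₗ[ℂ] ℂ) (T T' : ℕ → A) (Q : Eps → Eps → ℕ → ℕ → ℝ)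
    (hC3 : C3 φ T T') (hC4 : C4 T T' Q) :
    (φ (star (T 1) * T 1) * φ (star (T 2) * T 2) *
        (((Q Eps.star Eps.star 2 1 * Q Eps.star Eps.one 2 1 *
            Q Eps.one Eps.star 2 1 * Q Eps.one Eps.one 2 1 : ℝ) : ℂ) - 1) = 0) ∧
    (φ (star (T 1) * T 1) * φ (star (T 2) * T 2) ≠ 0 →
      Q Eps.star Eps.star 2 1 * Q Eps.star Eps.one 2 1 *
        Q Eps.one Eps.star 2 1 * Q Eps.one Eps.one 2 1 = 1) := by
  set c : ℝ := Q Eps.star Eps.star 2 1 * Q Eps.star Eps.one 2 1 *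
    Q Eps.one Eps.star 2 1 * Q Eps.one Eps.one 2 1
  have h12 := hC3.map_mul_mul_of_ne (show 1 ≠ 2 by decide) .star .one .star .one
  have h21 := hC3.map_mul_mul_of_ne (show 2 ≠ 1 by decide) .star .one .star .one
  have hswap := congrArg φ (hC4.mul_mul_eq_smul (show 1 ≠ 2 by decide) .star .one .star .one)
  simp only [Teps, map_smul, smul_eq_mul] at h12 h21 hswap
  have key : φ (star (T 1) * T 1) * φ (star (T 2) * T 2) * ((c : ℂ) - 1) = 0 := by
    linear_combination h21 - hswap - (c : ℂ) * h12
  refine ⟨key, fun hne => ?_⟩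
  exact_mod_cast sub_eq_zero.mp ((mul_eq_zero.mp key).resolve_left hne)

/-- under (C3) and (C4),
`φ(T_1^*T_1)·φ(T_2^*T_2)·(Q_{∗,∗}(2,1)Q_{∗,1}(2,1)Q_{1,∗}(2,1)Q_{1,1}(2,1) − 1) = 0`;
in particular, if `φ(T_1^*T_1)·φ(T_2^*T_2) ≠ 0` then the product of the four coefficients
equals `1`. -/
theorem stmt9 {A : Type*} [Ring A] [Algebra ℂ A] [StarRing A]
    (φ : A →ₗ[ℂ] ℂ) (hφ1 : φ 1 = 1) (T T' : ℕ → A) (Q : Eps → Eps → ℕ → ℕ → ℝ)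
    (hC3 : C3 φ T T') (hC4 : C4 T T' Q) :
    (φ (star (T 1) * T 1) * φ (star (T 2) * T 2) *
        (((Q Eps.star Eps.star 2 1 * Q Eps.star Eps.one 2 1 *
            Q Eps.one Eps.star 2 1 * Q Eps.one Eps.one 2 1 : ℝ) : ℂ) - 1) = 0) ∧
    (φ (star (T 1) * T 1) * φ (star (T 2) * T 2) ≠ 0 →
      Q Eps.star Eps.star 2 1 * Q Eps.star Eps.one 2 1 *
        Q Eps.one Eps.star 2 1 * Q Eps.one Eps.one 2 1 = 1) :=
  stmt9_general φ T T' Q hC3 hC4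
end

section
/- With the Jordan–Wigner matrix model in M₂(ℝ)^{⊗N}, for all 1 ≤ i < j ≤ N one has: T_{N,i}^* T_{N,j}^* = Q(i,j) · T_{N,j}^* T_{N,i}^*, T_{N,i}^* T_{N,j} = Q(i,j) · T_{N,j} T_{N,i}^*, and T_{N,i}^* T′_{N,j} = Q̃(i,j) · T′_{N,j} T_{N,i}^*. -/
open Matrix
open scoped Kronecker BigOperators Classical

/-- The diagonal matrix `σ_x = [[1,0],[0,x]]`. -/
def sigmaM (x : ℝ) : Matrix (Fin 2) (Fin 2) ℝ := !![1, 0; 0, x]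

/-- The matrix `γ_x = [[0,0],[x,0]]`. -/
def gammaM (x : ℝ) : Matrix (Fin 2) (Fin 2) ℝ := !![0, 0; x, 0]

/-- The iterated Kronecker product realizing `M₂(ℝ)^{⊗k}` inside `M_{2^k}(ℝ)`. -/
def tensorFold : (k : ℕ) → (Fin k → Matrix (Fin 2) (Fin 2) ℝ) →
    Matrix (Fin (2 ^ k)) (Fin (2 ^ k)) ℝ
  | 0, _ => 1
  | k + 1, a =>
      Matrix.reindex (finProdFinEquiv.trans (finCongr (pow_succ 2 k).symm))
        (finProdFinEquiv.trans (finCongr (pow_succ 2 k).symm))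
        ((tensorFold k fun j => a j.castSucc) ⊗ₖ a (Fin.last k))

/-- The Jordan–Wigner matrix
`T_{N,i} = σ_{Q(1,i)} ⊗ ⋯ ⊗ σ_{Q(i-1,i)} ⊗ γ_1 ⊗ σ_1 ⊗ ⋯ ⊗ σ_1` (slot `k` of the tensor
product corresponds to the index `k+1 ∈ {1,…,N}`). -/
def TN (N : ℕ) (Q : ℕ → ℕ → ℝ) (i : ℕ) : Matrix (Fin (2 ^ N)) (Fin (2 ^ N)) ℝ :=
  tensorFold N fun k =>
    if (k : ℕ) + 1 < i then sigmaM (Q ((k : ℕ) + 1) i)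
    else if (k : ℕ) + 1 = i then gammaM 1
    else sigmaM 1

/-- The extended Jordan–Wigner matrix
`T'_{N,i} = σ_{Q̃(1,i)} ⊗ ⋯ ⊗ σ_{Q̃(i-1,i)} ⊗ γ_{Ψ_i} ⊗ σ_{Q(i+1,i)Q̃(i+1,i)} ⊗ ⋯ ⊗ σ_{Q(N,i)Q̃(N,i)}`. -/
def TN' (N : ℕ) (Q Qt : ℕ → ℕ → ℝ) (Ψ : ℕ → ℝ) (i : ℕ) :
    Matrix (Fin (2 ^ N)) (Fin (2 ^ N)) ℝ :=
  tensorFold N fun k =>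
    if (k : ℕ) + 1 < i then sigmaM (Qt ((k : ℕ) + 1) i)
    else if (k : ℕ) + 1 = i then gammaM (Ψ i)
    else sigmaM (Q ((k : ℕ) + 1) i * Qt ((k : ℕ) + 1) i)

/-- The functional `φ_N(a_1 ⊗ ⋯ ⊗ a_N) = ∏ (a_k)_{11}`: the top-left entry. -/
def phiN (N : ℕ) (M : Matrix (Fin (2 ^ N)) (Fin (2 ^ N)) ℝ) : ℝ :=
  M ⟨0, pow_pos (by norm_num) N⟩ ⟨0, pow_pos (by norm_num) N⟩

lemma sigma_transpose (x : ℝ) : (sigmaM x)ᵀ = sigmaM x := by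
  ext a b; fin_cases a <;> fin_cases b <;> simp [sigmaM]

lemma sigmaM_one : sigmaM 1 = 1 := by
  ext a b; fin_cases a <;> fin_cases b <;> simp [sigmaM, Matrix.one_apply]

lemma sigma_mul (x y : ℝ) : sigmaM x * sigmaM y = sigmaM (x * y) := by
  ext a b; fin_cases a <;> fin_cases b <;> simp [sigmaM, Matrix.mul_apply, Fin.sum_univ_two]

lemma gamma_transpose (x : ℝ) : (gammaM x)ᵀ = !![0, x; 0, 0] := by
  ext a b; fin_cases a <;> fin_cases b <;> simp [gammaM]

lemma gammaT_mul_sigma' (x : ℝ) : (gammaM 1)ᵀ * sigmaM x = x • (sigmaM x * (gammaM 1)ᵀ) := by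
  rw [gamma_transpose]
  ext a b; fin_cases a <;> fin_cases b <;>
    simp [sigmaM, Matrix.mul_apply, Fin.sum_univ_two]

lemma tf_mul : ∀ (k : ℕ) (a b : Fin k → Matrix (Fin 2) (Fin 2) ℝ),
    tensorFold k a * tensorFold k b = tensorFold k (fun j => a j * b j)
  | 0, a, b => by simp [tensorFold]
  | (k+1), a, b => by
      simp only [tensorFold, reindex_apply, submatrix_mul_equiv, ← mul_kronecker_mul,
        tf_mul k]

lemma tf_transpose : ∀ (k : ℕ) (a : Fin k → Matrix (Fin 2) (Fin 2) ℝ),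
    (tensorFold k a)ᵀ = tensorFold k (fun j => (a j)ᵀ)
  | 0, a => by simp [tensorFold]
  | (k+1), a => by
      simp only [tensorFold, reindex_apply, transpose_submatrix, ← kroneckerMap_transpose,
        ← tf_transpose k]

lemma tf_smul_prod : ∀ (k : ℕ) (a b : Fin k → Matrix (Fin 2) (Fin 2) ℝ) (c : Fin k → ℝ),
    (∀ j, a j = c j • b j) → tensorFold k a = (∏ j, c j) • tensorFold k b
  | 0, a, b, c, h => by simp [tensorFold]
  | (k+1), a, b, c, h => by
      have ih := tf_smul_prod k (fun j => a j.castSucc) (fun j => b j.castSucc)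
        (fun j => c j.castSucc) (fun j => h j.castSucc)
      simp only [tensorFold, ih, h (Fin.last k), smul_kronecker, kronecker_smul,
        Fin.prod_univ_castSucc, reindex_apply, submatrix_smul, smul_smul, mul_comm]
      rfl

lemma tf_comm (N : ℕ) (A B : Fin N → Matrix (Fin 2) (Fin 2) ℝ) (c : Fin N → ℝ)
    (h : ∀ k, A k * B k = c k • (B k * A k)) :
    tensorFold N A * tensorFold N B = (∏ k, c k) • (tensorFold N B * tensorFold N A) := by
  rw [tf_mul, tf_mul]
  exact tf_smul_prod N _ _ c h

lemma prod_ite_slot (N i : ℕ) (q : ℝ) (h1 : 1 ≤ i) (hN : i ≤ N) :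
    (∏ k : Fin N, if (k : ℕ) + 1 = i then q else 1) = q := by
  rw [Finset.prod_eq_single (⟨i - 1, by omega⟩ : Fin N)]
  · rw [if_pos (by simp; omega)]
  · intro b _ hb
    rw [if_neg]
    intro hc
    exact hb (Fin.ext (by simp; omega))
  · simp

/-- commutation relations for the Jordan–Wigner matrices when `i < j`:
`T_{N,i}^* T_{N,j}^* = Q(i,j)·T_{N,j}^* T_{N,i}^*`,
`T_{N,i}^* T_{N,j} = Q(i,j)·T_{N,j} T_{N,i}^*`, and
`T_{N,i}^* T'_{N,j} = Q̃(i,j)·T'_{N,j} T_{N,i}^*`. -/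
theorem stmt10 (N : ℕ) (Q Qt : ℕ → ℕ → ℝ) (Ψ : ℕ → ℝ)
    (hQsymm : ∀ i j, Q i j = Q j i)
    (hQne : ∀ i j, i ≠ j → Q i j ≠ 0)
    (hQtne : ∀ i j, i ≠ j → Qt i j ≠ 0)
    (i j : ℕ) (h1i : 1 ≤ i) (hij : i < j) (hjN : j ≤ N) :
    ((TN N Q i)ᵀ * (TN N Q j)ᵀ = Q i j • ((TN N Q j)ᵀ * (TN N Q i)ᵀ)) ∧
    ((TN N Q i)ᵀ * TN N Q j = Q i j • (TN N Q j * (TN N Q i)ᵀ)) ∧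
    ((TN N Q i)ᵀ * TN' N Q Qt Ψ j = Qt i j • (TN' N Q Qt Ψ j * (TN N Q i)ᵀ)) := by
  have hTi : (TN N Q i)ᵀ = tensorFold N (fun k =>
      (if (k : ℕ) + 1 < i then sigmaM (Q ((k : ℕ) + 1) i)
       else if (k : ℕ) + 1 = i then gammaM 1 else sigmaM 1)ᵀ) := tf_transpose N _
  have hTj : (TN N Q j)ᵀ = tensorFold N (fun k =>
      (if (k : ℕ) + 1 < j then sigmaM (Q ((k : ℕ) + 1) j)
       else if (k : ℕ) + 1 = j then gammaM 1 else sigmaM 1)ᵀ) := tf_transpose N _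
  have hiN : i ≤ N := le_of_lt (lt_of_lt_of_le hij hjN)
  refine ⟨?_, ?_, ?_⟩
  · rw [hTi, hTj,
      tf_comm N _ _ (fun k => if (k : ℕ) + 1 = i then Q i j else 1) ?_,
      prod_ite_slot N i (Q i j) h1i hiN]
    intro k
    beta_reduce
    split_ifs <;>
      first
        | omega
        | simp_all [sigma_transpose, sigmaM_one, sigma_mul, gammaT_mul_sigma', mul_comm]
  · rw [hTi, show TN N Q j = tensorFold N _ from rfl,
      tf_comm N _ _ (fun k => if (k : ℕ) + 1 = i then Q i j else 1) ?_,
      prod_ite_slot N i (Q i j) h1i hiN]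
    intro k
    beta_reduce
    split_ifs <;>
      first
        | omega
        | simp_all [sigma_transpose, sigmaM_one, sigma_mul, gammaT_mul_sigma', mul_comm]
  · rw [hTi, show TN' N Q Qt Ψ j = tensorFold N _ from rfl,
      tf_comm N _ _ (fun k => if (k : ℕ) + 1 = i then Qt i j else 1) ?_,
      prod_ite_slot N i (Qt i j) h1i hiN]
    intro k
    beta_reduce
    split_ifs <;>
      first
        | omega
        | simp_all [sigma_transpose, sigmaM_one, sigma_mul, gammaT_mul_sigma', mul_comm]
end

section
/- Under the random model assumptions, for every n ≥ 1 and every type-B pair partition π_f of [2n], E[Y_{N,π_f}] = α^{NB(π_f)} · q^{Cr(π)+2·Nest(π_f)} · N^{−n} · binom(N,n) · n!; consequently lim_{N→∞} E[Y_{N,π_f}] = α^{NB(π_f)} · q^{Cr(π)+2·Nest(π_f)}. -/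
open Filter MeasureTheory ProbabilityTheory
open scoped BigOperators Classical

/-- `NB(π_f)`: the number of blocks colored `-1`. -/
def NBnum {m : ℕ} (p : Fin m → Fin m) (f : Fin m → Bool) : ℕ :=
  (Finset.univ.filter fun a : Fin m => a < p a ∧ f a = false).card

/-- `Cr(π)`: the number of (unordered) crossing pairs of blocks. -/
def CrNum {m : ℕ} (p : Fin m → Fin m) : ℕ :=
  (Finset.univ.filter fun ab : Fin m × Fin m =>
    ab.1 < p ab.1 ∧ ab.2 < p ab.2 ∧ ab.1 < ab.2 ∧ ab.2 < p ab.1 ∧ p ab.1 < p ab.2).card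

/-- `Nest(π_f)`: the number of (ordered) pairs of an outer block and a nested block of
color `-1`. -/
def NestNum {m : ℕ} (p : Fin m → Fin m) (f : Fin m → Bool) : ℕ :=
  (Finset.univ.filter fun ab : Fin m × Fin m =>
    ab.1 < p ab.1 ∧ ab.2 < p ab.2 ∧ ab.1 < ab.2 ∧ p ab.2 < p ab.1 ∧ f ab.2 = false).card

/-- The random model: three mutually independent families of real random variables
`{Q(i,j)}_{i<j}` (i.i.d., compactly supported away from `0`, extended symmetrically),
`{Q̃(i,j)}_{i≠j}` (i.i.d., compactly supported away from `0`) and independent `{Ψ_i}`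
(compactly supported, with summable variances), with prescribed first and second moments
`E[Q(i,j)] = q`, `E[Q(i,j)²] = 1`, `E[Q̃(i,j)] = q` and `E[Ψ_i] = α`. -/
structure RandomModel (Ω : Type*) [MeasureSpace Ω]
    (Q Qt : ℕ → ℕ → Ω → ℝ) (Ψ : ℕ → Ω → ℝ) (q α : ℝ) : Prop where
  prob : IsProbabilityMeasure (ℙ : Measure Ω)
  measQ : ∀ i j, Measurable (Q i j)
  measQt : ∀ i j, Measurable (Qt i j)
  measPsi : ∀ i, Measurable (Ψ i)
  symm : ∀ i j, Q i j = Q j i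
  indep : iIndepFun
    ((fun x : (ℕ × ℕ) ⊕ (ℕ × ℕ) ⊕ ℕ => match x with
      | Sum.inl (i, j) => if i < j then Q i j else fun _ => 0
      | Sum.inr (Sum.inl (i, j)) => if i ≠ j then Qt i j else fun _ => 0
      | Sum.inr (Sum.inr i) => Ψ i) : (ℕ × ℕ) ⊕ (ℕ × ℕ) ⊕ ℕ → Ω → ℝ) ℙ
  idQ : ∀ i j k l, i < j → k < l →
    Measure.map (Q i j) ℙ = Measure.map (Q k l) ℙ
  idQt : ∀ i j k l, i ≠ j → k ≠ l →
    Measure.map (Qt i j) ℙ = Measure.map (Qt k l) ℙ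
  suppQ : ∃ D : Set ℝ, IsCompact D ∧ (∃ ε > 0, ∀ x ∈ D, ε ≤ |x|) ∧
    ∀ i j, i < j → ∀ ω, Q i j ω ∈ D
  suppQt : ∃ D : Set ℝ, IsCompact D ∧ (∃ ε > 0, ∀ x ∈ D, ε ≤ |x|) ∧
    ∀ i j, i ≠ j → ∀ ω, Qt i j ω ∈ D
  suppPsi : ∃ D : Set ℝ, IsCompact D ∧ ∀ i, ∀ ω, Ψ i ω ∈ D
  varSummable : Summable fun i => variance (Ψ i) ℙ
  hq : -1 < q ∧ q < 1
  hα : -1 < α ∧ α < 1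
  momQ : ∀ i j, i < j → ∫ ω, Q i j ω = q
  momQ2 : ∀ i j, i < j → ∫ ω, (Q i j ω) ^ 2 = 1
  momQt : ∀ i j, i ≠ j → ∫ ω, Qt i j ω = q
  momPsi : ∀ i, ∫ ω, Ψ i ω = α

/-- The (random) commutation coefficients of the model:
for `i < j`: `Q_{∗,∗}(i,j) = Q(i,j)`, `Q_{∗,1}(i,j) = Q(i,j)`, `Q_{∗,′}(i,j) = Q̃(i,j)`;
for `i > j`: `Q_{∗,∗}(i,j) = Q(i,j)⁻¹`, `Q_{∗,1}(i,j) = Q(i,j)`,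
`Q_{∗,′}(i,j) = Q(i,j)²Q̃(i,j)`. -/
noncomputable def Qcoef {Ω : Type*} (Q Qt : ℕ → ℕ → Ω → ℝ) (ω : Ω) :
    Eps → Eps → ℕ → ℕ → ℝ
  | Eps.star, Eps.star => fun i j => if i < j then Q i j ω else (Q i j ω)⁻¹
  | Eps.star, Eps.one => fun i j => Q i j ω
  | Eps.star, Eps.prime => fun i j =>
      if i < j then Qt i j ω else (Q i j ω) ^ 2 * Qt i j ω
  | _, _ => fun _ _ => 0

/-- The classical random variable
`Y_{N,π_f} = N^{-n} ∑_{i ∈ [N]^{2n}, ker i = π} Ξ(π_f,i) ∏_{f({z,w})=-1} Ψ_{i(w)}`. -/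
noncomputable def Ymodel {Ω : Type*} (Q Qt : ℕ → ℕ → Ω → ℝ) (Ψ : ℕ → Ω → ℝ)
    {n : ℕ} (N : ℕ) (p : Fin (2 * n) → Fin (2 * n)) (f : Fin (2 * n) → Bool)
    (ω : Ω) : ℝ :=
  ((N : ℝ) ^ n)⁻¹ *
    ∑ i ∈ (Fintype.piFinset fun _ : Fin (2 * n) => Finset.Icc 1 N).filter
        (fun i => kerPair i p),
      Xi (Qcoef Q Qt ω) p f i *
        ∏ a : Fin (2 * n), if a < p a ∧ f a = false then Ψ (i (p a)) ω else 1

/-!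
Fix a tuple `i` with `ker i = π`. The labels `i a` of the left legs `a` of the blocks are pairwise
distinct, so the factor of `Ξ(π_f, i)` attached to a pair of blocks with labels `u ≠ v` is a
function of `Q(u,v), Q̃(u,v), Q̃(v,u)` alone, and the `Ψ`-factors involve distinct `Ψ_u`. These
groups of coordinates are disjoint, so by independence the expectation factorises over pairs of
blocks: a crossing contributes `E Q = E Q̃ = E[Q²] E Q̃ = q`, a nesting over a block of colour `1`
contributes `E[Q²] = E[Q⁻¹Q] = 1`, one over a block of colour `-1` contributes `E[Q Q̃] = q²`, and
each block of colour `-1` contributes `E Ψ = α`. All `N (N-1) ⋯ (N-n+1)` admissible tuples thus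
have the same expectation, and `N^{-n} N (N-1) ⋯ (N-n+1) → 1`.
-/

open Finset

section IndependentBlocks

variable {Ω ι : Type*} {F : ι → Ω → ℝ} {S T : Finset ι} {G H : Ω → ℝ}

def MeasurablyDependsOn (F : ι → Ω → ℝ) (S : Finset ι) (G : Ω → ℝ) : Prop :=
  ∃ φ : (S → ℝ) → ℝ, Measurable φ ∧ G = fun ω => φ fun j => F j ω

namespace MeasurablyDependsOn

lemma const (c : ℝ) : MeasurablyDependsOn F S fun _ => c :=
  ⟨fun _ => c, measurable_const, rfl⟩

lemma apply {j : ι} (hj : j ∈ S) : MeasurablyDependsOn F S (F j) :=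
  ⟨fun v => v ⟨j, hj⟩, measurable_pi_apply _, rfl⟩

lemma comp (hG : MeasurablyDependsOn F S G) {g : ℝ → ℝ} (hg : Measurable g) :
    MeasurablyDependsOn F S (g ∘ G) := by
  obtain ⟨φ, hφ, rfl⟩ := hG
  exact ⟨g ∘ φ, hg.comp hφ, rfl⟩

lemma mul (hG : MeasurablyDependsOn F S G) (hH : MeasurablyDependsOn F S H) :
    MeasurablyDependsOn F S fun ω => G ω * H ω := by
  obtain ⟨φ, hφ, rfl⟩ := hG
  obtain ⟨ψ, hψ, rfl⟩ := hH
  exact ⟨fun v => φ v * ψ v, hφ.mul hψ, rfl⟩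

lemma ite (c : Prop) [Decidable c] (hG : MeasurablyDependsOn F S G)
    (hH : MeasurablyDependsOn F S H) :
    MeasurablyDependsOn F S fun ω => if c then G ω else H ω := by
  split_ifs
  exacts [hG, hH]

lemma mono (hG : MeasurablyDependsOn F S G) (hST : S ⊆ T) : MeasurablyDependsOn F T G := by
  obtain ⟨φ, hφ, rfl⟩ := hG
  exact ⟨fun v => φ fun j => v ⟨j, hST j.2⟩,
    hφ.comp (measurable_pi_lambda _ fun j => measurable_pi_apply _), rfl⟩

lemma finset_prod {κ : Type*} {K : Finset κ} {G : κ → Ω → ℝ}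
    (hG : ∀ k ∈ K, MeasurablyDependsOn F S (G k)) :
    MeasurablyDependsOn F S fun ω => ∏ k ∈ K, G k ω := by
  classical
  induction K using Finset.induction_on with
  | empty => simpa using const 1
  | insert k K hk ih =>
    simp only [Finset.prod_insert hk]
    exact (hG k (K.mem_insert_self k)).mul (ih fun l hl => hG l (K.mem_insert_of_mem hl))

lemma measurable [MeasurableSpace Ω] (hF : ∀ j, Measurable (F j))
    (hG : MeasurablyDependsOn F S G) : Measurable G := by
  obtain ⟨φ, hφ, rfl⟩ := hG
  exact hφ.comp (measurable_pi_lambda _ fun j => hF j)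

lemma indepFun [MeasurableSpace Ω] {μ : Measure Ω} (hFi : iIndepFun F μ)
    (hF : ∀ j, Measurable (F j)) (hST : Disjoint S T)
    (hG : MeasurablyDependsOn F S G) (hH : MeasurablyDependsOn F T H) : IndepFun G H μ := by
  obtain ⟨φ, hφ, rfl⟩ := hG
  obtain ⟨ψ, hψ, rfl⟩ := hH
  exact (hFi.indepFun_finset S T hST hF).comp hφ hψ

end MeasurablyDependsOn

variable {κ : Type*} {K : Finset κ} {S : κ → Finset ι} {G : κ → Ω → ℝ}

lemma measurablyDependsOn_biUnion_prod [DecidableEq ι]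
    (hG : ∀ k ∈ K, MeasurablyDependsOn F (S k) (G k)) :
    MeasurablyDependsOn F (K.biUnion S) fun ω => ∏ k ∈ K, G k ω :=
  .finset_prod fun k hk => (hG k hk).mono (Finset.subset_biUnion_of_mem S hk)

variable [MeasurableSpace Ω] {μ : Measure Ω}

lemma indepFun_finset_prod_of_measurablyDependsOn {k : κ} (hFi : iIndepFun F μ)
    (hF : ∀ j, Measurable (F j)) (hS : (↑(insert k K) : Set κ).PairwiseDisjoint S)
    (hk : k ∉ K) (hG : ∀ l ∈ insert k K, MeasurablyDependsOn F (S l) (G l)) :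
    IndepFun (G k) (fun ω => ∏ l ∈ K, G l ω) μ := by
  classical
  refine (hG k (K.mem_insert_self k)).indepFun hFi hF ?_
    (measurablyDependsOn_biUnion_prod fun l hl => hG l (K.mem_insert_of_mem hl))
  refine (Finset.disjoint_biUnion_right _ _ _).mpr fun l hl => hS (by simp) (by simp [hl]) ?_
  rintro rfl
  exact hk hl

lemma integral_finset_prod_of_measurablyDependsOn (hFi : iIndepFun F μ)
    (hF : ∀ j, Measurable (F j)) (hS : (K : Set κ).PairwiseDisjoint S)
    (hG : ∀ k ∈ K, MeasurablyDependsOn F (S k) (G k)) :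
    ∫ ω, ∏ k ∈ K, G k ω ∂μ = ∏ k ∈ K, ∫ ω, G k ω ∂μ := by
  classical
  induction K using Finset.induction_on with
  | empty => simp [hFi.isProbabilityMeasure]
  | insert k K hk ih =>
    have hGK : ∀ l ∈ K, MeasurablyDependsOn F (S l) (G l) := fun l hl =>
      hG l (K.mem_insert_of_mem hl)
    have hind := indepFun_finset_prod_of_measurablyDependsOn hFi hF hS hk hG
    simp only [Finset.prod_insert hk]
    rw [hind.integral_fun_mul_eq_mul_integral
      ((hG k (K.mem_insert_self k)).measurable hF).aestronglyMeasurable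
      ((measurablyDependsOn_biUnion_prod hGK).measurable hF).aestronglyMeasurable,
      ih (hS.subset (by simp)) hGK]

lemma integrable_finset_prod_of_measurablyDependsOn (hFi : iIndepFun F μ)
    (hF : ∀ j, Measurable (F j)) (hS : (K : Set κ).PairwiseDisjoint S)
    (hG : ∀ k ∈ K, MeasurablyDependsOn F (S k) (G k)) (hGi : ∀ k ∈ K, Integrable (G k) μ) :
    Integrable (fun ω => ∏ k ∈ K, G k ω) μ := by
  classical
  induction K using Finset.induction_on with
  | empty =>
    have := hFi.isProbabilityMeasure
    simp
  | insert k K hk ih =>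
    simp only [Finset.prod_insert hk]
    exact (indepFun_finset_prod_of_measurablyDependsOn hFi hF hS hk hG).integrable_mul
      (hGi k (K.mem_insert_self k)) (ih (hS.subset (by simp))
        (fun l hl => hG l (K.mem_insert_of_mem hl)) fun l hl => hGi l (K.mem_insert_of_mem hl))

end IndependentBlocks

lemma abs_ite_le_of_le {c : Prop} [Decidable c] {x C : ℝ} (hC : 1 ≤ C) (hx : c → |x| ≤ C) :
    |if c then x else 1| ≤ C := by
  split_ifs with h
  exacts [hx h, by simpa using hC]

namespace IsPairing

variable {m : ℕ} {p : Fin m → Fin m}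

lemma involutive_s13 (hp : IsPairing p) : Function.Involutive p := fun a => (hp a).1

lemma min_eq_min_iff (hp : IsPairing p) {k l : Fin m} :
    min k (p k) = min l (p l) ↔ k = l ∨ p k = l := by
  constructor
  · intro h
    rcases min_choice k (p k) with hk | hk <;> rcases min_choice l (p l) with hl | hl <;>
      rw [hk, hl] at h
    · exact Or.inl h
    · exact Or.inr (by rw [h, hp.involutive_s13 l])
    · exact Or.inr h
    · exact Or.inl (hp.involutive_s13.injective h)
  · rintro (rfl | rfl)
    · rfl
    · rw [hp.involutive_s13 k, min_comm]

lemma min_lt_apply_min (hp : IsPairing p) (a : Fin m) : min a (p a) < p (min a (p a)) := by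
  rcases (hp a).2.lt_or_gt with h | h
  · rwa [min_eq_right h.le, hp.involutive_s13]
  · rwa [min_eq_left h.le]

lemma two_mul_card_filter_lt (hp : IsPairing p) : 2 * #{a | a < p a} = m := by
  have hswap : #{a | a < p a} = #{a | ¬ a < p a} := by
    refine Finset.card_nbij' p p ?_ ?_ (fun a _ => hp.involutive_s13 a) (fun a _ => hp.involutive_s13 a)
    · intro a ha
      simp only [Finset.coe_filter, Finset.mem_univ, true_and, Set.mem_ofPred_eq] at ha ⊢
      rw [hp.involutive_s13]
      exact ha.asymm
    · intro a ha
      simp only [Finset.coe_filter, Finset.mem_univ, true_and, Set.mem_ofPred_eq] at ha ⊢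
      rw [hp.involutive_s13]
      exact lt_of_le_of_ne (not_lt.mp ha) (hp a).2
  have := Finset.card_filter_add_card_filter_not (s := Finset.univ) (fun a : Fin m => a < p a)
  rw [Finset.card_univ, Fintype.card_fin] at this
  omega

end IsPairing

namespace kerPair

variable {m : ℕ} {p : Fin m → Fin m} {i : Fin m → ℕ}

lemma apply_pair (hi : kerPair i p) (hp : IsPairing p) (a : Fin m) : i (p a) = i a :=
  (hi (p a) a).mpr (Or.inr (hp a).1)

lemma injOn (hi : kerPair i p) (hp : IsPairing p) : Set.InjOn i {a | a < p a} := by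
  intro a ha b hb h
  refine ((hi a b).mp h).resolve_right ?_
  rintro rfl
  rw [Set.mem_ofPred_eq, hp.involutive_s13] at hb
  exact ha.asymm hb

end kerPair

lemma IsPairing.card_filter_kerPair {m : ℕ} {p : Fin m → Fin m} (hp : IsPairing p) (N : ℕ) :
    #((Fintype.piFinset fun _ : Fin m => Finset.Icc 1 N).filter fun i => kerPair i p)
      = N.descFactorial #{a | a < p a} := by
  set L : Finset (Fin m) := {a | a < p a}
  have hL : ∀ a, min a (p a) ∈ L := fun a => by simpa [L] using hp.min_lt_apply_min a
  let e : {i // i ∈ (Fintype.piFinset fun _ : Fin m => Finset.Icc 1 N).filter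
      fun i => kerPair i p} ≃ (L ↪ Finset.Icc 1 N) :=
    { toFun := fun i =>
        ⟨fun a => ⟨i.1 a, Fintype.mem_piFinset.mp (Finset.mem_filter.mp i.2).1 a⟩,
          fun a b h => Subtype.ext <| ((Finset.mem_filter.mp i.2).2.injOn hp)
            (Finset.mem_filter.mp a.2).2 (Finset.mem_filter.mp b.2).2 (congrArg Subtype.val h)⟩
      invFun := fun e => ⟨fun a => e ⟨min a (p a), hL a⟩, by
        refine Finset.mem_filter.mpr ⟨Fintype.mem_piFinset.mpr fun a => (e _).2, fun k l => ?_⟩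
        rw [← hp.min_eq_min_iff, ← Subtype.ext_iff, e.injective.eq_iff, Subtype.mk.injEq]⟩
      left_inv := fun i => by
        ext a
        change i.1 (min a (p a)) = i.1 a
        rcases min_choice a (p a) with h | h <;> rw [h]
        exact (Finset.mem_filter.mp i.2).2.apply_pair hp a
      right_inv := fun e => by
        ext a
        simp [min_eq_left (Finset.mem_filter.mp a.2).2.le] }
  rw [Finset.card_eq_of_equiv_fintype e, Fintype.card_embedding_eq]
  simp

def modelFamily {Ω : Type*} (Q Qt : ℕ → ℕ → Ω → ℝ) (Ψ : ℕ → Ω → ℝ) :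
    (ℕ × ℕ) ⊕ (ℕ × ℕ) ⊕ ℕ → Ω → ℝ
  | Sum.inl (i, j) => if i < j then Q i j else fun _ => 0
  | Sum.inr (Sum.inl (i, j)) => if i ≠ j then Qt i j else fun _ => 0
  | Sum.inr (Sum.inr i) => Ψ i

def pairIndices (u v : ℕ) : Finset ((ℕ × ℕ) ⊕ (ℕ × ℕ) ⊕ ℕ) :=
  {.inl (min u v, max u v), .inr (.inl (u, v)), .inr (.inl (v, u))}

lemma pairIndices_comm (u v : ℕ) : pairIndices u v = pairIndices v u := by
  ext j
  simp only [pairIndices, min_comm u v, max_comm u v, Finset.mem_insert, Finset.mem_singleton]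
  tauto

lemma disjoint_pairIndices {u v u' v' : ℕ} (h : ¬ ((u = u' ∧ v = v') ∨ (u = v' ∧ v = u'))) :
    Disjoint (pairIndices u v) (pairIndices u' v') := by
  rw [Finset.disjoint_left]
  intro j hj hj'
  simp only [pairIndices, Finset.mem_insert, Finset.mem_singleton] at hj hj'
  rcases hj with rfl | rfl | rfl <;>
    simp only [Sum.inl.injEq, Sum.inr.injEq, Prod.mk.injEq, reduceCtorEq, or_false,
      false_or] at hj' <;> omega

namespace RandomModel

variable {Ω : Type*} [MeasureSpace Ω] {Q Qt : ℕ → ℕ → Ω → ℝ} {Ψ : ℕ → Ω → ℝ} {q α : ℝ}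
  (hM : RandomModel Ω Q Qt Ψ q α) {x y : ℕ}
include hM

lemma Q_property_of_ne {P : (Ω → ℝ) → Prop} (h : ∀ x y, x < y → P (Q x y)) (hxy : x ≠ y) :
    P (Q x y) := by
  rcases hxy.lt_or_gt with hlt | hlt
  · exact h x y hlt
  · rw [hM.symm]
    exact h y x hlt

lemma iIndepFun_modelFamily : iIndepFun (modelFamily Q Qt Ψ) ℙ := hM.indep

lemma measurable_modelFamily (j : (ℕ × ℕ) ⊕ (ℕ × ℕ) ⊕ ℕ) :
    Measurable (modelFamily Q Qt Ψ j) := by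
  rcases j with ⟨u, v⟩ | ⟨u, v⟩ | u
  · simp only [modelFamily]
    split_ifs
    exacts [hM.measQ u v, measurable_const]
  · simp only [modelFamily]
    split_ifs
    exacts [hM.measQt u v, measurable_const]
  · exact hM.measPsi u

lemma modelFamily_Q (hxy : x ≠ y) : modelFamily Q Qt Ψ (.inl (min x y, max x y)) = Q x y := by
  rcases hxy.lt_or_gt with h | h
  · simp [modelFamily, h, min_eq_left h.le, max_eq_right h.le]
  · simp [modelFamily, h, min_eq_right h.le, max_eq_left h.le, hM.symm y x]

lemma measurablyDependsOn_Qcoef (hxy : x ≠ y) (ε ε' : Eps) :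
    MeasurablyDependsOn (modelFamily Q Qt Ψ) (pairIndices x y)
      fun ω => Qcoef Q Qt ω ε ε' x y := by
  have hQ : MeasurablyDependsOn (modelFamily Q Qt Ψ) (pairIndices x y) (Q x y) :=
    hM.modelFamily_Q hxy ▸ .apply (by simp [pairIndices])
  have hQt : MeasurablyDependsOn (modelFamily Q Qt Ψ) (pairIndices x y) (Qt x y) := by
    simpa [modelFamily, hxy] using
      MeasurablyDependsOn.apply (F := modelFamily Q Qt Ψ) (S := pairIndices x y)
        (j := .inr (.inl (x, y))) (by simp [pairIndices])
  cases ε <;> cases ε' <;> simp only [Qcoef]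
  all_goals first
    | exact .const 0
    | exact hQ
    | exact .ite _ hQ (hQ.comp measurable_inv)
    | exact .ite _ hQt ((hQ.comp (measurable_id.pow_const 2)).mul hQt)

lemma Q_ne_zero (hxy : x ≠ y) (ω : Ω) : Q x y ω ≠ 0 := by
  obtain ⟨D, -, ⟨ε, hε, hεD⟩, hD⟩ := hM.suppQ
  refine hM.Q_property_of_ne (P := fun X => X ω ≠ 0) (fun u v huv h0 => ?_) hxy
  have := hεD _ (hD u v huv ω)
  rw [h0, abs_zero] at this
  linarith

lemma exists_abs_Qcoef_le :
    ∃ C, 1 ≤ C ∧ ∀ ω ε ε' x y, x ≠ y → |Qcoef Q Qt ω ε ε' x y| ≤ C := by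
  obtain ⟨D₁, hD₁, ⟨ε, hε, hεD₁⟩, hQD₁⟩ := hM.suppQ
  obtain ⟨D₂, hD₂, -, hQtD₂⟩ := hM.suppQt
  obtain ⟨A, hA, hAD₁⟩ := hD₁.isBounded.exists_pos_norm_le
  obtain ⟨B, hB, hBD₂⟩ := hD₂.isBounded.exists_pos_norm_le
  have hQ : ∀ x y, x ≠ y → ∀ ω, |Q x y ω| ≤ A ∧ ε ≤ |Q x y ω| := fun x y hxy ω =>
    hM.Q_property_of_ne (P := fun X => |X ω| ≤ A ∧ ε ≤ |X ω|)
      (fun u v huv => ⟨hAD₁ _ (hQD₁ u v huv ω), hεD₁ _ (hQD₁ u v huv ω)⟩) hxy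
  have hA2B : 0 ≤ A ^ 2 * B := by positivity
  have : 0 < ε⁻¹ := inv_pos.mpr hε
  refine ⟨1 + A + ε⁻¹ + B + A ^ 2 * B, by linarith, fun ω ε₁ ε₂ x y hxy => ?_⟩
  obtain ⟨hQA, hεQ⟩ := hQ x y hxy ω
  have hQtB : |Qt x y ω| ≤ B := hBD₂ _ (hQtD₂ x y hxy ω)
  have hinv : |(Q x y ω)⁻¹| ≤ ε⁻¹ := by
    rw [abs_inv]
    exact inv_anti₀ hε hεQ
  have hsq : |Q x y ω ^ 2 * Qt x y ω| ≤ A ^ 2 * B := by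
    rw [abs_mul, abs_pow]
    gcongr
  cases ε₁ <;> cases ε₂ <;> simp only [Qcoef] <;> try split_ifs
  all_goals first | simp only [abs_zero]; positivity | linarith

lemma exists_abs_Psi_le : ∃ C, 1 ≤ C ∧ ∀ u ω, |Ψ u ω| ≤ C := by
  obtain ⟨D, hD, hΨD⟩ := hM.suppPsi
  obtain ⟨C, -, hCD⟩ := hD.isBounded.exists_pos_norm_le
  exact ⟨max C 1, le_max_right _ _, fun u ω => (hCD _ (hΨD u ω)).trans (le_max_left _ _)⟩

lemma integral_Q (hxy : x ≠ y) : ∫ ω, Q x y ω = q :=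
  hM.Q_property_of_ne (P := fun X => ∫ ω, X ω = q) hM.momQ hxy

lemma integral_Q_sq (hxy : x ≠ y) : ∫ ω, Q x y ω ^ 2 = 1 :=
  hM.Q_property_of_ne (P := fun X => ∫ ω, X ω ^ 2 = 1) hM.momQ2 hxy

lemma integral_comp_Q_mul_Qt (hxy : x ≠ y) {g : ℝ → ℝ} (hg : Measurable g) :
    ∫ ω, g (Q x y ω) * Qt x y ω = (∫ ω, g (Q x y ω)) * q := by
  have hind : IndepFun (Q x y) (Qt x y) ℙ := by
    have h := hM.iIndepFun_modelFamily.indepFun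
      (i := .inl (min x y, max x y)) (j := .inr (.inl (x, y))) (by simp)
    rwa [hM.modelFamily_Q hxy, show modelFamily Q Qt Ψ (.inr (.inl (x, y))) = Qt x y by
      simp [modelFamily, hxy]] at h
  have h := (hind.comp hg measurable_id).integral_fun_mul_eq_mul_integral
    (hg.comp (hM.measQ x y)).aestronglyMeasurable (hM.measQt x y).aestronglyMeasurable
  simpa [Function.comp_def, hM.momQt x y hxy] using h

lemma integral_Qcoef_star (hxy : x ≠ y) (b : Bool) :
    ∫ ω, Qcoef Q Qt ω .star (if b then .one else .prime) x y = q := by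
  cases b
  · by_cases h : x < y
    · simpa [Qcoef, h] using hM.momQt x y hxy
    · have h2 := hM.integral_comp_Q_mul_Qt hxy (g := fun r => r ^ 2) (by fun_prop)
      rw [hM.integral_Q_sq hxy, one_mul] at h2
      simpa [Qcoef, h] using h2
  · simpa [Qcoef] using hM.integral_Q hxy

lemma integral_Qcoef_star_star_mul (hxy : x ≠ y) (b : Bool) :
    ∫ ω, Qcoef Q Qt ω .star .star x y * Qcoef Q Qt ω .star (if b then .one else .prime) x y
      = if b then 1 else q ^ 2 := by
  have := hM.prob
  have hQQt : ∫ ω, Q x y ω * Qt x y ω = q ^ 2 := by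
    simpa [hM.integral_Q hxy, sq] using hM.integral_comp_Q_mul_Qt hxy measurable_id
  cases b <;> by_cases h : x < y <;> simp only [Qcoef, h, if_true, if_false, Bool.false_eq_true]
  · exact hQQt
  · have hcancel : ∀ ω, (Q x y ω)⁻¹ * (Q x y ω ^ 2 * Qt x y ω) = Q x y ω * Qt x y ω :=
      fun ω => by field_simp [hM.Q_ne_zero hxy ω]
    simpa only [hcancel] using hQQt
  · simpa only [← sq] using hM.integral_Q_sq hxy
  · simp [inv_mul_cancel₀ (hM.Q_ne_zero hxy _)]

end RandomModel

def pairFactor (Q : Eps → Eps → ℕ → ℕ → ℝ) {m : ℕ} (p : Fin m → Fin m) (f : Fin m → Bool)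
    (i : Fin m → ℕ) (a b : Fin m) : ℝ :=
  (if a < p a ∧ b < p b ∧ a < b ∧ b < p a ∧ p a < p b then
      Q Eps.star (if f a then Eps.one else Eps.prime) (i b) (i (p a)) else 1) *
  (if a < p a ∧ b < p b ∧ a < b ∧ p b < p a then
      Q Eps.star Eps.star (i a) (i b) *
        Q Eps.star (if f b then Eps.one else Eps.prime) (i a) (i (p b)) else 1)

lemma Xi_eq_prod_pairFactor (Q : Eps → Eps → ℕ → ℕ → ℝ) {m : ℕ} (p : Fin m → Fin m)
    (f : Fin m → Bool) (i : Fin m → ℕ) :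
    Xi Q p f i = ∏ z : Fin m × Fin m, pairFactor Q p f i z.1 z.2 := by
  simp only [pairFactor, Finset.prod_mul_distrib, Fintype.prod_prod_type]
  rfl

section Tuple

variable {Ω : Type*} {m : ℕ} (Q Qt : ℕ → ℕ → Ω → ℝ) (Ψ : ℕ → Ω → ℝ) (p : Fin m → Fin m)
  (f : Fin m → Bool) (i : Fin m → ℕ)

noncomputable def tupleFactor : (Fin m × Fin m) ⊕ Fin m → Ω → ℝ
  | .inl (a, b) => fun ω => pairFactor (Qcoef Q Qt ω) p f i a b
  | .inr a => fun ω => if a < p a ∧ f a = false then Ψ (i (p a)) ω else 1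

def tupleIndices : (Fin m × Fin m) ⊕ Fin m → Finset ((ℕ × ℕ) ⊕ (ℕ × ℕ) ⊕ ℕ)
  | .inl (a, b) => if a < p a ∧ b < p b ∧ a < b then pairIndices (i a) (i b) else ∅
  | .inr a => if a < p a then {.inr (.inr (i a))} else ∅

lemma Xi_mul_prod_eq_prod_tupleFactor (ω : Ω) :
    Xi (Qcoef Q Qt ω) p f i * (∏ a, if a < p a ∧ f a = false then Ψ (i (p a)) ω else 1)
      = ∏ k, tupleFactor Q Qt Ψ p f i k ω := by
  rw [Fintype.prod_sum_type, Xi_eq_prod_pairFactor]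
  rfl

variable {Q Qt Ψ p i}

lemma pairwiseDisjoint_tupleIndices (hp : IsPairing p) (hi : kerPair i p) :
    (Set.univ : Set ((Fin m × Fin m) ⊕ Fin m)).PairwiseDisjoint (tupleIndices p i) := by
  have hinj := hi.injOn hp
  rintro (⟨a, b⟩ | a) - (⟨a', b'⟩ | a') - hne <;> simp only [Function.onFun, tupleIndices]
  · split_ifs with h h'
    · refine disjoint_pairIndices fun hab => hne ?_
      rcases hab with ⟨haa, hbb⟩ | ⟨hab, hba⟩
      · rw [hinj h.1 h'.1 haa, hinj h.2.1 h'.2.1 hbb]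
      · rw [hinj h.1 h'.2.1 hab, hinj h.2.1 h'.1 hba] at h
        exact absurd h'.2.2 h.2.2.asymm
    all_goals simp
  · split_ifs <;> simp [pairIndices]
  · split_ifs <;> simp [pairIndices]
  · split_ifs with h h'
    · rw [Finset.disjoint_singleton, ne_eq, Sum.inr.injEq, Sum.inr.injEq]
      exact fun haa => hne (congrArg Sum.inr (hinj h h' haa))
    all_goals simp

variable [MeasureSpace Ω] {q α : ℝ} (hM : RandomModel Ω Q Qt Ψ q α)
include hM

lemma RandomModel.measurablyDependsOn_tupleFactor (hp : IsPairing p) (hi : kerPair i p)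
    (k : (Fin m × Fin m) ⊕ Fin m) :
    MeasurablyDependsOn (modelFamily Q Qt Ψ) (tupleIndices p i k)
      (tupleFactor Q Qt Ψ p f i k) := by
  rcases k with ⟨a, b⟩ | a <;> simp only [tupleFactor, tupleIndices, pairFactor]
  · by_cases h : a < p a ∧ b < p b ∧ a < b
    · have hab : i a ≠ i b := fun hab => h.2.2.ne (hi.injOn hp h.1 h.2.1 hab)
      simp only [if_pos h, hi.apply_pair hp]
      refine .mul (.ite _ ?_ (.const 1)) (.ite _ (.mul ?_ ?_) (.const 1))
      · exact pairIndices_comm (i a) (i b) ▸ hM.measurablyDependsOn_Qcoef hab.symm _ _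
      all_goals exact hM.measurablyDependsOn_Qcoef hab _ _
    · have hcross : ¬ (a < p a ∧ b < p b ∧ a < b ∧ b < p a ∧ p a < p b) := fun h' =>
        h ⟨h'.1, h'.2.1, h'.2.2.1⟩
      have hnest : ¬ (a < p a ∧ b < p b ∧ a < b ∧ p b < p a) := fun h' =>
        h ⟨h'.1, h'.2.1, h'.2.2.1⟩
      simpa only [if_neg hcross, if_neg hnest, mul_one] using .const 1
  · by_cases h : a < p a
    · simp only [if_pos h, hi.apply_pair hp]
      exact .ite _ (.apply (Finset.mem_singleton_self _)) (.const 1)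
    · simpa only [h, false_and, if_false] using .const 1

lemma RandomModel.integrable_tupleFactor (hp : IsPairing p) (hi : kerPair i p)
    (k : (Fin m × Fin m) ⊕ Fin m) : Integrable (tupleFactor Q Qt Ψ p f i k) := by
  have := hM.prob
  obtain ⟨C, hC, hQC⟩ := hM.exists_abs_Qcoef_le
  obtain ⟨D, hD, hΨD⟩ := hM.exists_abs_Psi_le
  have hCC : 1 ≤ C * C := one_le_mul_of_one_le_of_one_le hC hC
  have hCCC : 1 ≤ C * (C * C) := one_le_mul_of_one_le_of_one_le hC hCC
  refine Integrable.of_bound ((hM.measurablyDependsOn_tupleFactor f hp hi k).measurable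
    hM.measurable_modelFamily).aestronglyMeasurable (C * (C * C) + D) (ae_of_all _ fun ω => ?_)
  rw [Real.norm_eq_abs]
  rcases k with ⟨a, b⟩ | a
  · have hbound : |pairFactor (Qcoef Q Qt ω) p f i a b| ≤ C * (C * C) := by
      rw [pairFactor, abs_mul, hi.apply_pair hp, hi.apply_pair hp]
      refine mul_le_mul (abs_ite_le_of_le hC fun h => hQC _ _ _ _ _ fun hba =>
          h.2.2.1.ne' (hi.injOn hp h.2.1 h.1 hba))
        (abs_ite_le_of_le hCC fun h => ?_) (abs_nonneg _) (by linarith)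
      have hab : i a ≠ i b := fun hab => h.2.2.1.ne (hi.injOn hp h.1 h.2.1 hab)
      rw [abs_mul]
      exact mul_le_mul (hQC _ _ _ _ _ hab) (hQC _ _ _ _ _ hab) (abs_nonneg _) (by linarith)
    exact hbound.trans (by linarith)
  · exact abs_ite_le_of_le (by linarith) fun _ => (hΨD _ ω).trans (by linarith)

lemma RandomModel.integral_tupleFactor_inl (hp : IsPairing p) (hi : kerPair i p)
    (z : Fin m × Fin m) :
    ∫ ω, tupleFactor Q Qt Ψ p f i (.inl z) ω
      = (if z.1 < p z.1 ∧ z.2 < p z.2 ∧ z.1 < z.2 ∧ z.2 < p z.1 ∧ p z.1 < p z.2 then q else 1) *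
        (if z.1 < p z.1 ∧ z.2 < p z.2 ∧ z.1 < z.2 ∧ p z.2 < p z.1 ∧ f z.2 = false then q ^ 2
          else 1) := by
  have := hM.prob
  obtain ⟨a, b⟩ := z
  simp only [tupleFactor, pairFactor, hi.apply_pair hp]
  by_cases hcross : a < p a ∧ b < p b ∧ a < b ∧ b < p a ∧ p a < p b
  · have hnest : ¬ (a < p a ∧ b < p b ∧ a < b ∧ p b < p a) := fun h =>
      h.2.2.2.asymm hcross.2.2.2.2
    have hba : i b ≠ i a := fun hba => hcross.2.2.1.ne' (hi.injOn hp hcross.2.1 hcross.1 hba)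
    have hnest' : ¬ (a < p a ∧ b < p b ∧ a < b ∧ p b < p a ∧ f b = false) := fun h =>
      hnest ⟨h.1, h.2.1, h.2.2.1, h.2.2.2.1⟩
    simp only [if_pos hcross, if_neg hnest, if_neg hnest', mul_one]
    exact hM.integral_Qcoef_star hba (f a)
  simp only [if_neg hcross, one_mul]
  by_cases hnest : a < p a ∧ b < p b ∧ a < b ∧ p b < p a
  · have hab : i a ≠ i b := fun hab => hnest.2.2.1.ne (hi.injOn hp hnest.1 hnest.2.1 hab)
    simp only [if_pos hnest]
    rw [hM.integral_Qcoef_star_star_mul hab (f b)]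
    simp only [hnest.1, hnest.2.1, hnest.2.2.1, hnest.2.2.2, true_and]
    cases f b <;> simp
  · have hnest' : ¬ (a < p a ∧ b < p b ∧ a < b ∧ p b < p a ∧ f b = false) := fun h =>
      hnest ⟨h.1, h.2.1, h.2.2.1, h.2.2.2.1⟩
    simp [if_neg hnest, if_neg hnest']

lemma RandomModel.integral_tupleFactor_inr (a : Fin m) :
    ∫ ω, tupleFactor Q Qt Ψ p f i (.inr a) ω = if a < p a ∧ f a = false then α else 1 := by
  have := hM.prob
  simp only [tupleFactor]
  split_ifs
  · exact hM.momPsi _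
  · simp

lemma RandomModel.integrable_Xi_mul_prod_Psi (hp : IsPairing p) (hi : kerPair i p) :
    Integrable fun ω =>
      Xi (Qcoef Q Qt ω) p f i * ∏ a, if a < p a ∧ f a = false then Ψ (i (p a)) ω else 1 := by
  simp_rw [Xi_mul_prod_eq_prod_tupleFactor]
  exact integrable_finset_prod_of_measurablyDependsOn hM.iIndepFun_modelFamily
    hM.measurable_modelFamily (by simpa using pairwiseDisjoint_tupleIndices hp hi)
    (fun k _ => hM.measurablyDependsOn_tupleFactor f hp hi k)
    fun k _ => hM.integrable_tupleFactor f hp hi k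

lemma RandomModel.integral_Xi_mul_prod_Psi (hp : IsPairing p) (hi : kerPair i p) :
    ∫ ω, Xi (Qcoef Q Qt ω) p f i * (∏ a, if a < p a ∧ f a = false then Ψ (i (p a)) ω else 1)
      = α ^ NBnum p f * q ^ (CrNum p + 2 * NestNum p f) := by
  simp_rw [Xi_mul_prod_eq_prod_tupleFactor]
  rw [integral_finset_prod_of_measurablyDependsOn hM.iIndepFun_modelFamily
    hM.measurable_modelFamily (by simpa using pairwiseDisjoint_tupleIndices hp hi)
    (fun k _ => hM.measurablyDependsOn_tupleFactor f hp hi k), Fintype.prod_sum_type]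
  simp only [hM.integral_tupleFactor_inl f hp hi, hM.integral_tupleFactor_inr f,
    Finset.prod_mul_distrib, ← Finset.prod_filter, Finset.prod_const]
  rw [← pow_mul, pow_add, NBnum, CrNum, NestNum]
  ring

end Tuple

lemma tendsto_inv_pow_mul_descFactorial (k : ℕ) :
    Tendsto (fun N : ℕ => ((N : ℝ) ^ k)⁻¹ * N.descFactorial k) atTop (nhds 1) := by
  have hne : ∀ᶠ N : ℕ in atTop, (N : ℝ) ^ k ≠ 0 := by
    filter_upwards [eventually_ne_atTop 0] with N hN
    exact pow_ne_zero _ (Nat.cast_ne_zero.mpr hN)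
  refine ((Asymptotics.isEquivalent_iff_tendsto_one hne).mp
    (isEquivalent_descFactorial k)).congr fun N => ?_
  simp [div_eq_inv_mul]

theorem stmt13_general {Ω : Type*} [MeasureSpace Ω]
    (Q Qt : ℕ → ℕ → Ω → ℝ) (Ψ : ℕ → Ω → ℝ) (q α : ℝ)
    (hmodel : RandomModel Ω Q Qt Ψ q α)
    (n : ℕ) (p : Fin (2 * n) → Fin (2 * n)) (f : Fin (2 * n) → Bool)
    (hp : IsPairing p) :
    (∀ N : ℕ, ∫ ω, Ymodel Q Qt Ψ N p f ω
        = α ^ NBnum p f * q ^ (CrNum p + 2 * NestNum p f) *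
            (((N : ℝ) ^ n)⁻¹ * (N.choose n) * (Nat.factorial n))) ∧
    Tendsto (fun N : ℕ => ∫ ω, Ymodel Q Qt Ψ N p f ω) atTop
      (nhds (α ^ NBnum p f * q ^ (CrNum p + 2 * NestNum p f))) := by
  have hleft : #{a | a < p a} = n := by
    have := hp.two_mul_card_filter_lt
    omega
  have hexp : ∀ N : ℕ, ∫ ω, Ymodel Q Qt Ψ N p f ω
      = α ^ NBnum p f * q ^ (CrNum p + 2 * NestNum p f) *
          (((N : ℝ) ^ n)⁻¹ * N.descFactorial n) := fun N => by
    unfold Ymodel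
    rw [integral_const_mul, integral_finsetSum _ fun i hi =>
        hmodel.integrable_Xi_mul_prod_Psi f hp (Finset.mem_filter.mp hi).2,
      Finset.sum_congr rfl fun i hi =>
        hmodel.integral_Xi_mul_prod_Psi f hp (Finset.mem_filter.mp hi).2,
      Finset.sum_const, hp.card_filter_kerPair, hleft, nsmul_eq_mul]
    ring
  refine ⟨fun N => ?_, ?_⟩
  · rw [hexp, Nat.descFactorial_eq_factorial_mul_choose]
    push_cast
    ring
  · simpa [hexp] using (tendsto_inv_pow_mul_descFactorial n).const_mul
      (α ^ NBnum p f * q ^ (CrNum p + 2 * NestNum p f))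

/-- the exact expectation
`E[Y_{N,π_f}] = α^{NB(π_f)} q^{Cr(π)+2Nest(π_f)} · N^{-n} C(N,n) n!` and its limit
`α^{NB(π_f)} q^{Cr(π)+2Nest(π_f)}` as `N → ∞`. -/
theorem stmt13 {Ω : Type*} [MeasureSpace Ω]
    (Q Qt : ℕ → ℕ → Ω → ℝ) (Ψ : ℕ → Ω → ℝ) (q α : ℝ)
    (hmodel : RandomModel Ω Q Qt Ψ q α)
    (n : ℕ) (hn : 1 ≤ n) (p : Fin (2 * n) → Fin (2 * n)) (f : Fin (2 * n) → Bool)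
    (hp : IsPairing p) (hf : IsColoring p f) :
    (∀ N : ℕ, ∫ ω, Ymodel Q Qt Ψ N p f ω
        = α ^ NBnum p f * q ^ (CrNum p + 2 * NestNum p f) *
            (((N : ℝ) ^ n)⁻¹ * (N.choose n) * (Nat.factorial n))) ∧
    Tendsto (fun N : ℕ => ∫ ω, Ymodel Q Qt Ψ N p f ω) atTop
      (nhds (α ^ NBnum p f * q ^ (CrNum p + 2 * NestNum p f))) :=
  stmt13_general Q Qt Ψ q α hmodel n p f hp
end
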